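/- For TIOTSs P₀ and P₁ with identical alphabets and triple-trace structures (I, O, TT_i, TR_i, TE_i) for i ∈ {0,1}: P₀ ⊑ P₁ if and only if TT₁ ⊆ TT₀, TR₁ ⊆ TR₀ and TE₁ ⊆ TE₀. -/

import Mathlib

open Classical

namespace TSpec

/-- Positive real time delays. -/
abbrev Delay : Type := {d : ℝ // 0 < d}

/-- Sum of two positive delays. -/
def dsum (d e : Delay) : Delay := ⟨d.1 + e.1, add_pos d.2 e.2⟩

/-- Timed actions over an action alphabet `Act`: visible actions or positive delays. -/
inductive TAct (Act : Type) : Type where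
  | act : Act → TAct Act
  | delay : Delay → TAct Act

/-- A timed action is a delay. -/
def TAct.isDelay {Act : Type} : TAct Act → Prop
  | .act _ => False
  | .delay _ => True

/-- A timed action is valid for a set `A` of visible actions:
visible actions must belong to `A`, delays are always valid.
(For `A = O` this expresses membership in the timed outputs `tO = O ⊎ ℝ>0`,
for `A = I ∪ O` membership in the timed alphabet `tA`.) -/
def TAct.valid {Act : Type} (A : Set Act) : TAct Act → Prop
  | .act a => a ∈ A
  | .delay _ => True

/-- Timed words: finite sequences of timed actions. -/
abbrev TWord (Act : Type) := List (TAct Act)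

/-- Well-formed timed word: no two adjacent delays (reals). -/
def IsTWord {Act : Type} (w : TWord Act) : Prop :=
  List.Chain' (fun x y => ¬ (TAct.isDelay x ∧ TAct.isDelay y)) w

/-- Well-formed timed word over the alphabet `A`. -/
def ValidW {Act : Type} (A : Set Act) (w : TWord Act) : Prop :=
  IsTWord w ∧ ∀ α ∈ w, TAct.valid A α

/-- Concatenation of timed words, coalescing (summing) adjacent delays. -/
def tcat {Act : Type} (w w' : TWord Act) : TWord Act :=
  match w.getLast?, w' with
  | some (TAct.delay d), TAct.delay e :: rest => w.dropLast ++ TAct.delay (dsum d e) :: rest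
  | _, _ => w ++ w'

/-- `Pref w₀ w`: `w₀` is a prefix of `w` (w.r.t. coalescing concatenation). -/
def Pref {Act : Type} (w₀ w : TWord Act) : Prop := ∃ w₁, tcat w₀ w₁ = w

/-- Strict prefix. -/
def SPref {Act : Type} (w₀ w : TWord Act) : Prop := Pref w₀ w ∧ w₀ ≠ w

/-- `X · tA*`: all extensions of words in `X` by timed words over the alphabet `A`. -/
def Ext {Act : Type} (A : Set Act) (X : Set (TWord Act)) : Set (TWord Act) :=
  {w | ∃ w₀ ∈ X, ∃ w₁, ValidW A w₁ ∧ w = tcat w₀ w₁}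

/-- `X · ℝ≥0`: all extensions of words in `X` by a (possibly zero) delay. -/
def ExtDelay {Act : Type} (X : Set (TWord Act)) : Set (TWord Act) :=
  X ∪ {w | ∃ w₀ ∈ X, ∃ d : Delay, w = tcat w₀ [TAct.delay d]}

/-- `w` is a time-extension of `w₀`: equal, or extended by a single delay. -/
def TimeExt {Act : Type} (w₀ w : TWord Act) : Prop :=
  w = w₀ ∨ ∃ d : Delay, w = tcat w₀ [TAct.delay d]

/-- States of a TIOTS: plain states together with the inconsistent state `⊥`
and the timestop state `⊤`. -/
inductive St (σ : Type) : Type where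
  | plain : σ → St σ
  | bot : St σ
  | top : St σ

/-- Map a function on plain states over `St`, preserving `⊥` and `⊤`. -/
def St.map {σ τ : Type} (f : σ → τ) : St σ → St τ
  | .plain p => .plain (f p)
  | .bot => .bot
  | .top => .top

/-- Interchange `⊤` and `⊥`. -/
def St.swap {σ : Type} : St σ → St σ
  | .plain p => .plain p
  | .bot => .top
  | .top => .bot

/-- Timed I/O transition system over action alphabet `Act`:
inputs `I`, outputs `O`, plain-state type `Sig`, initial state, and a
transition relation labelled by timed actions. -/
structure TIOTS (Act : Type) : Type 1 where
  Sig : Type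
  I : Set Act
  O : Set Act
  init : St Sig
  tr : St Sig → TAct Act → St Sig → Prop

/-- Full (visible) alphabet of a TIOTS. -/
def TIOTS.A {Act : Type} (P : TIOTS Act) : Set Act := P.I ∪ P.O

/-- Well-formedness: disjoint inputs/outputs, alphabet-respecting transitions,
`⊤` quiescent (exactly the delay self-loops), `⊥` chaotic (exactly the
self-loops for each timed action of the alphabet), and time additivity. -/
def WF {Act : Type} (P : TIOTS Act) : Prop :=
  Disjoint P.I P.O ∧
  (∀ s α s', P.tr s α s' → TAct.valid P.A α) ∧
  (∀ α (s' : St P.Sig), P.tr .top α s' ↔ (TAct.isDelay α ∧ s' = .top)) ∧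
  (∀ α (s' : St P.Sig), P.tr .bot α s' ↔ (TAct.valid P.A α ∧ s' = .bot)) ∧
  (∀ (p : P.Sig) (d e : Delay) (s' : St P.Sig),
      P.tr (.plain p) (.delay (dsum d e)) s' ↔
        ∃ s, P.tr (.plain p) (.delay d) s ∧ P.tr s (.delay e) s')

/-- Determinism: no ambiguous transitions. -/
def Deterministic {Act : Type} (P : TIOTS Act) : Prop :=
  ∀ s α s' s'', P.tr s α s' → P.tr s α s'' → s' = s''

/-- `α` is enabled at state `s`. -/
def enabled {Act : Type} (P : TIOTS Act) (s : St P.Sig) (α : TAct Act) : Prop :=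
  ∃ s', P.tr s α s'

/-- `⊥`-completion: add `p →a ⊥` for every plain state `p` and input `a` not enabled at `p`. -/
def botComplete {Act : Type} (P : TIOTS Act) : TIOTS Act :=
  { P with
    tr := fun s α s' =>
      P.tr s α s' ∨
        ((∃ p, s = St.plain p) ∧ (∃ a ∈ P.I, α = TAct.act a) ∧ ¬ enabled P s α ∧ s' = .bot) }

/-- `⊤`-completion: add `p →α ⊤` for every plain state `p` and timed output `α ∈ tO`
not enabled at `p`. -/
def topComplete {Act : Type} (P : TIOTS Act) : TIOTS Act :=
  { P with
    tr := fun s α s' =>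
      P.tr s α s' ∨
        ((∃ p, s = St.plain p) ∧ TAct.valid P.O α ∧ ¬ enabled P s α ∧ s' = .top) }

/-- `(P^⊥)^⊤`. -/
def TIOTS.complete {Act : Type} (P : TIOTS Act) : TIOTS Act := topComplete (botComplete P)

/-- Finite executions: `Exec P s w s'` holds when there is a finite execution from
`s` to `s'` whose trace (labels with adjacent delays coalesced) is `w`. -/
inductive Exec {Act : Type} (P : TIOTS Act) : St P.Sig → TWord Act → St P.Sig → Prop where
  | nil (s : St P.Sig) : Exec P s [] s
  | cons {s : St P.Sig} {α : TAct Act} {s' : St P.Sig} {w : TWord Act} {s'' : St P.Sig} :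
      P.tr s α s' → Exec P s' w s'' → Exec P s (tcat [α] w) s''

/-- `s` is reachable from the initial state via trace `w`. -/
def Reach {Act : Type} (P : TIOTS Act) (w : TWord Act) (s : St P.Sig) : Prop :=
  Exec P P.init w s

/-- `⊥`-freeness: `⊥` is not reachable from the initial state. -/
def BotFree {Act : Type} (P : TIOTS Act) : Prop := ∀ w, ¬ Reach P w .bot

/-- Error traces of `P`: traces of `(P^⊥)^⊤` leading to `⊥`. -/
def TEset {Act : Type} (P : TIOTS Act) : Set (TWord Act) := {w | Reach P.complete w .bot}

/-- Magic traces of `P`: traces of `(P^⊥)^⊤` leading to `⊤`. -/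
def TMset {Act : Type} (P : TIOTS Act) : Set (TWord Act) := {w | Reach P.complete w .top}

/-- Plain traces of `P`: traces of `(P^⊥)^⊤` leading to a plain state. -/
def TPset {Act : Type} (P : TIOTS Act) : Set (TWord Act) :=
  {w | ∃ p, Reach P.complete w (St.plain p)}

/-- Realisable traces: `TR = TE ∪ TP`. -/
def TRset {Act : Type} (P : TIOTS Act) : Set (TWord Act) := TEset P ∪ TPset P

/-- All traces: `TT = TE ∪ TP ∪ TM`. -/
def TTset {Act : Type} (P : TIOTS Act) : Set (TWord Act) := TEset P ∪ TPset P ∪ TMset P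

/-- Composite plain-state space for binary operators: lone left states, lone right
states, and product states. -/
def CState (σ₀ σ₁ : Type) : Type := σ₀ ⊕ σ₁ ⊕ σ₀ × σ₁

def pairSt {σ₀ σ₁ : Type} (p : σ₀) (q : σ₁) : CState σ₀ σ₁ := Sum.inr (Sum.inr (p, q))

def embL {σ₀ σ₁ : Type} : St σ₀ → St (CState σ₀ σ₁) := St.map (fun p => Sum.inl p)

def embR {σ₀ σ₁ : Type} : St σ₁ → St (CState σ₀ σ₁) := St.map (fun q => Sum.inr (Sum.inl q))

/-- State table for parallel composition: `⊤` if either is `⊤`, otherwise `⊥`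
if either is `⊥`, otherwise the pair. -/
def stPar {σ₀ σ₁ : Type} : St σ₀ → St σ₁ → St (CState σ₀ σ₁)
  | .top, _ => .top
  | _, .top => .top
  | .bot, _ => .bot
  | _, .bot => .bot
  | .plain p, .plain q => .plain (pairSt p q)

/-- State table for conjunction: `⊤` if either is `⊤`, otherwise the other
operand if either is `⊥`, otherwise the pair. -/
def stAnd {σ₀ σ₁ : Type} : St σ₀ → St σ₁ → St (CState σ₀ σ₁)
  | .top, _ => .top
  | _, .top => .top
  | .bot, .bot => .bot
  | .bot, .plain q => .plain (Sum.inr (Sum.inl q))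
  | .plain p, .bot => .plain (Sum.inl p)
  | .plain p, .plain q => .plain (pairSt p q)

/-- State table for disjunction: `⊥` if either is `⊥`, otherwise the other
operand if either is `⊤`, otherwise the pair. -/
def stOr {σ₀ σ₁ : Type} : St σ₀ → St σ₁ → St (CState σ₀ σ₁)
  | .bot, _ => .bot
  | _, .bot => .bot
  | .top, .top => .top
  | .top, .plain q => .plain (Sum.inr (Sum.inl q))
  | .plain p, .top => .plain (Sum.inl p)
  | .plain p, .plain q => .plain (pairSt p q)

/-- State table for quotient `s₀ % s₁`: `⊥` if `s₁ = ⊤`, or if `s₀ = ⊥` and `s₁ ≠ ⊤`;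
`⊤` if `s₁ = ⊥` and `s₀ ≠ ⊥`, or if `s₀ = ⊤` and `s₁` plain; the pair if both plain. -/
def stQuo {σ₀ σ₁ : Type} : St σ₀ → St σ₁ → St (CState σ₀ σ₁)
  | _, .top => .bot
  | .bot, _ => .bot
  | _, .bot => .top
  | .top, .plain _ => .top
  | .plain p, .plain q => .plain (pairSt p q)

/-- Synchronised product of two (already `⊥`- and `⊤`-completed) TIOTSs, with the
given state-combination table and alphabets. The transition relation contains the
embedded component transitions (on lone states); from product states, shared
actions and all delays synchronise while independent visible actions interleave;
`⊥` is chaotic and `⊤` quiescent. -/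
def rawProd {Act : Type} (P Q : TIOTS Act)
    (comb : St P.Sig → St Q.Sig → St (CState P.Sig Q.Sig)) (I O : Set Act) : TIOTS Act where
  Sig := CState P.Sig Q.Sig
  I := I
  O := O
  init := comb P.init Q.init
  tr := fun s α s' =>
    (∃ p s₀, s = St.plain (Sum.inl p) ∧ P.tr (.plain p) α s₀ ∧ s' = embL s₀) ∨
    (∃ q s₁, s = St.plain (Sum.inr (Sum.inl q)) ∧ Q.tr (.plain q) α s₁ ∧ s' = embR s₁) ∨
    (∃ p q, s = St.plain (pairSt p q) ∧
      ((TAct.valid (P.A ∩ Q.A) α ∧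
          ∃ (s₀ : St P.Sig) (s₁ : St Q.Sig),
            P.tr (.plain p) α s₀ ∧ Q.tr (.plain q) α s₁ ∧ s' = comb s₀ s₁) ∨
       (∃ a, α = TAct.act a ∧ a ∈ P.A \ Q.A ∧
          ∃ s₀ : St P.Sig, P.tr (.plain p) α s₀ ∧ s' = comb s₀ (.plain q)) ∨
       (∃ a, α = TAct.act a ∧ a ∈ Q.A \ P.A ∧
          ∃ s₁ : St Q.Sig, Q.tr (.plain q) α s₁ ∧ s' = comb (.plain p) s₁))) ∨
    (s = .bot ∧ TAct.valid (I ∪ O) α ∧ s' = .bot) ∨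
    (s = .top ∧ TAct.isDelay α ∧ s' = .top)

/-- Parallel composition `P ∥ Q` (requires `∥`-composability: disjoint output sets). -/
def parC {Act : Type} (P Q : TIOTS Act) : TIOTS Act :=
  rawProd P.complete Q.complete stPar ((P.I ∪ Q.I) \ (P.O ∪ Q.O)) (P.O ∪ Q.O)

/-- Conjunction `P ∧ Q` (requires identical alphabets). -/
def andC {Act : Type} (P Q : TIOTS Act) : TIOTS Act :=
  rawProd P.complete Q.complete stAnd P.I P.O

/-- Disjunction `P ∨ Q` (requires identical alphabets). -/
def orC {Act : Type} (P Q : TIOTS Act) : TIOTS Act :=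
  rawProd P.complete Q.complete stOr P.I P.O

/-- Reduction of a subset of states in the subset construction: a subset containing
`⊥` becomes `⊥`; `⊤` is removed from any subset other than `{⊤}`. -/
noncomputable def detSt {σ : Type} (X : Set (St σ)) : St (Set σ) :=
  if St.bot ∈ X then .bot
  else if X = {St.top} then .top
  else .plain {p | St.plain p ∈ X}

/-- Successor subset. -/
def post {Act : Type} (P : TIOTS Act) (X : Set P.Sig) (α : TAct Act) : Set (St P.Sig) :=
  {s' | ∃ p ∈ X, P.tr (.plain p) α s'}

/-- Determinisation `P^D` by subset construction on `(P^⊥)^⊤`. -/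
noncomputable def TIOTS.det {Act : Type} (P : TIOTS Act) : TIOTS Act where
  Sig := Set P.Sig
  I := P.I
  O := P.O
  init := detSt {P.complete.init}
  tr := fun s α s' =>
    (∃ X, s = St.plain X ∧ TAct.valid P.A α ∧ s' = detSt (post P.complete X α)) ∨
    (s = .bot ∧ TAct.valid P.A α ∧ s' = .bot) ∨
    (s = .top ∧ TAct.isDelay α ∧ s' = .top)

/-- Mirror `P¬`: determinise, then interchange inputs with outputs and `⊤` with `⊥`. -/
noncomputable def TIOTS.mirror {Act : Type} (P : TIOTS Act) : TIOTS Act where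
  Sig := (P.det).Sig
  I := P.O
  O := P.I
  init := St.swap (P.det).init
  tr := fun s α s' => (P.det).tr (St.swap s) α (St.swap s')

/-- Alphabet domination: `A_Q ⊆ A_P` and `O_Q ⊆ O_P`. -/
def Dominates {Act : Type} (P Q : TIOTS Act) : Prop := Q.A ⊆ P.A ∧ Q.O ⊆ P.O

/-- Quotient `P % Q` (requires that `P` dominates `Q`); `Q` is determinised first. -/
noncomputable def quoC {Act : Type} (P Q : TIOTS Act) : TIOTS Act :=
  rawProd P.complete (Q.det).complete stQuo (P.I ∪ Q.O) (P.O \ Q.O)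

/-- `Q` is an environment for `P`: complementary alphabets. -/
def Env {Act : Type} (P Q : TIOTS Act) : Prop := Q.I = P.O ∧ Q.O = P.I

/-- Substitutive refinement: `Refines P Q` means `P ⊑ Q`, i.e. the alphabets agree and
for every environment `R`, `⊥`-freeness of `P ∥ R` implies `⊥`-freeness of `Q ∥ R`. -/
def Refines {Act : Type} (P Q : TIOTS Act) : Prop :=
  P.I = Q.I ∧ P.O = Q.O ∧
  ∀ R : TIOTS Act, WF R → Env P R → BotFree (parC P R) → BotFree (parC Q R)

/-- Substitutive equivalence `P ≃ Q`. -/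
def SEquiv {Act : Type} (P Q : TIOTS Act) : Prop := Refines P Q ∧ Refines Q P

/-- Enabled timed actions at a plain state. -/
def eb {Act : Type} (G : TIOTS Act) (p : G.Sig) : Set (TAct Act) :=
  {α | enabled G (.plain p) α}

/-- The component move(s) proposed at a plain state: enabled outputs and delays. -/
def mvSet {Act : Type} (G : TIOTS Act) (p : G.Sig) : Set (TAct Act) :=
  {α | enabled G (.plain p) α ∧ TAct.valid G.O α}

/-- One-step relation between plain states. -/
def plainStep {Act : Type} (G : TIOTS Act) (p p' : G.Sig) : Prop :=
  ∃ α, G.tr (.plain p) α (.plain p')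

/-- Tree TIOTS: acyclic (on plain states), no state is the target of both an action-
and a delay-transition, action transitions into the same state coincide, and delay
transitions into the same state have the same source. -/
def IsTree {Act : Type} (G : TIOTS Act) : Prop :=
  (∀ p, ¬ Relation.TransGen (plainStep G) p p) ∧
  (∀ p p' p'' a d, G.tr (.plain p) (TAct.act a) (.plain p'') →
      G.tr (.plain p') (TAct.delay d) (.plain p'') → False) ∧
  (∀ p p' p'' a b, G.tr (.plain p) (TAct.act a) (.plain p'') →
      G.tr (.plain p') (TAct.act b) (.plain p'') → p = p' ∧ a = b) ∧
  (∀ p p' p'' d, G.tr (.plain p) (TAct.delay d) (.plain p'') →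
      G.tr (.plain p') (TAct.delay d) (.plain p'') → p = p')

/-- Strategy: a deterministic tree TIOTS in which every plain state enables exactly
the inputs together with a unique component move, the move being a single output or
a nonempty set of delays. -/
def IsStrategy {Act : Type} (G : TIOTS Act) : Prop :=
  WF G ∧ Deterministic G ∧ IsTree G ∧
  ∀ p : G.Sig,
    eb G p = {α | ∃ a ∈ G.I, α = TAct.act a} ∪ mvSet G p ∧
    ((∃ a ∈ G.O, mvSet G p = {TAct.act a}) ∨
      ((mvSet G p).Nonempty ∧ ∀ α ∈ mvSet G p, TAct.isDelay α))

/-- `G` is a partial unfolding of `Q`: a state map preserving `⊥`, `⊤`, plainness,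
the initial state and the transitions. -/
def PartialUnfolding {Act : Type} (G Q : TIOTS Act) : Prop :=
  G.I = Q.I ∧ G.O = Q.O ∧
  ∃ f : G.Sig → Q.Sig,
    St.map f G.init = Q.init ∧
    ∀ (p : G.Sig) (α : TAct Act) (s' : St G.Sig),
      G.tr (.plain p) α s' → Q.tr (.plain (f p)) α (St.map f s')

/-- Strategies contained in `P`: partial unfoldings of `(P^⊥)^⊤`. -/
def stg {Act : Type} (P : TIOTS Act) : Set (TIOTS Act) :=
  {G | IsStrategy G ∧ PartialUnfolding G P.complete}

/-- Affinity: identical alphabets and equal proposed moves after equal traces. -/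
def Affine {Act : Type} (G G' : TIOTS Act) : Prop :=
  G.I = G'.I ∧ G.O = G'.O ∧
  ∀ (w : TWord Act) (p : G.Sig) (p' : G'.Sig),
    Reach G w (.plain p) → Reach G' w (.plain p') → mvSet G p = mvSet G' p'

/-- Aggressiveness order `G ≼ G'` on affine strategies: `G` reaches `⊥` faster and
`⊤` slower than `G'`. -/
def Agg {Act : Type} (G G' : TIOTS Act) : Prop :=
  Affine G G' ∧
  (∀ w, Reach G' w .bot → ∃ w₀, Pref w₀ w ∧ Reach G w₀ .bot) ∧
  (∀ w, Reach G w .top → ∃ w₀, Pref w₀ w ∧ Reach G' w₀ .top)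

/-- Strategy semantics `[P]_s`: upward closure of `stg(P)` w.r.t. `≼`. -/
def ssem {Act : Type} (P : TIOTS Act) : Set (TIOTS Act) :=
  {G' | IsStrategy G' ∧ ∃ G ∈ stg P, Agg G G'}

/-- Strategy disjunction `G + G'` of (affine) strategies: their synchronised
`∨`-product, without further completion. -/
def stratPlus {Act : Type} (G G' : TIOTS Act) : TIOTS Act := rawProd G G' stOr G.I G.O

/-- Isomorphism of TIOTSs. -/
def TIso {Act : Type} (P Q : TIOTS Act) : Prop :=
  P.I = Q.I ∧ P.O = Q.O ∧
  ∃ e : P.Sig ≃ Q.Sig,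
    St.map (fun x => e x) P.init = Q.init ∧
    ∀ s α s', P.tr s α s' ↔ Q.tr (St.map (fun x => e x) s) α (St.map (fun x => e x) s')

/-- Disjunction closure of a set of strategies (strategies are identified up to
isomorphism): least superset closed under `+` of affine pairs. -/
inductive DClos {Act : Type} (S : Set (TIOTS Act)) : TIOTS Act → Prop where
  | base {G} : G ∈ S → DClos S G
  | disj {G G'} : DClos S G → DClos S G' → Affine G G' → DClos S (stratPlus G G')
  | iso {G G'} : DClos S G → TIso G G' → DClos S G'

/-- Disjunction closure `Π⁺` as a set. -/
def dclos {Act : Type} (S : Set (TIOTS Act)) : Set (TIOTS Act) := {G | DClos S G}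

/-- `[P]_s⁺`. -/
def sClos {Act : Type} (P : TIOTS Act) : Set (TIOTS Act) := dclos (ssem P)

/-- Coin strategies: functions from histories to `{0,1}`. -/
abbrev Coin (Act : Type) := TWord Act → Bool

/-- The strategy proposes output `a` at `p`. -/
def proposesA {Act : Type} (G : TIOTS Act) (p : G.Sig) (a : Act) : Prop :=
  TAct.act a ∈ mvSet G p

/-- The strategy proposes delay `d` at `p`. -/
def proposesD {Act : Type} (G : TIOTS Act) (p : G.Sig) (d : Delay) : Prop :=
  TAct.delay d ∈ mvSet G p

/-- Game-state combination for plays (game states carry the history). -/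
def stPlay {Act : Type} {σ₀ σ₁ : Type} (w : TWord Act) :
    St σ₀ → St σ₁ → St (σ₀ × σ₁ × TWord Act)
  | .top, _ => .top
  | _, .top => .top
  | .bot, _ => .bot
  | _, .bot => .bot
  | .plain p, .plain q => .plain (p, q, w)

/-- A component fires `α` if `α` is in its timed alphabet, and stays put otherwise. -/
def stepOrStay {Act : Type} (G : TIOTS Act) (p : G.Sig) (α : TAct Act) (s : St G.Sig) : Prop :=
  (TAct.valid G.A α ∧ G.tr (.plain p) α s) ∨ (¬ TAct.valid G.A α ∧ s = .plain p)

/-- Inputs that fire autonomously at a game state: synchronised inputs and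
independent inputs. -/
def firedInput {Act : Type} (GP GQ : TIOTS Act) (a : Act) : Prop :=
  a ∈ GP.I ∩ GQ.I ∨ (a ∈ GP.I ∪ GQ.I ∧ a ∉ GP.A ∩ GQ.A)

/-- The timed action `α` fires at game state `(p, q)` with history `w`: it is a fired
input, or a prevailing component move (an action prevails over a delay, the common
delays prevail when both propose delays, and the coin `h` resolves ties between two
proposed actions: `false` lets the left strategy win). -/
def fired {Act : Type} (GP GQ : TIOTS Act) (h : Coin Act) (p : GP.Sig) (q : GQ.Sig)
    (w : TWord Act) : TAct Act → Prop
  | TAct.act a =>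
      firedInput GP GQ a ∨
      (proposesA GP p a ∧ ((∃ b, proposesA GQ q b) → h w = false)) ∨
      (proposesA GQ q a ∧ ((∃ b, proposesA GP p b) → h w = true))
  | TAct.delay d => proposesD GP p d ∧ proposesD GQ q d

/-- The play `G_P ∥_h G_Q` of two strategies with composable alphabets against a
coin strategy `h`: a tree TIOTS over game states carrying histories. -/
def play {Act : Type} (GP GQ : TIOTS Act) (h : Coin Act) : TIOTS Act where
  Sig := GP.Sig × GQ.Sig × TWord Act
  I := (GP.I ∪ GQ.I) \ (GP.O ∪ GQ.O)
  O := GP.O ∪ GQ.O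
  init := stPlay [] GP.init GQ.init
  tr := fun s α s' =>
    (∃ p q w, s = St.plain (p, q, w) ∧ fired GP GQ h p q w α ∧
      ∃ (s₀ : St GP.Sig) (s₁ : St GQ.Sig),
        stepOrStay GP p α s₀ ∧ stepOrStay GQ q α s₁ ∧
        s' = stPlay (tcat w [α]) s₀ s₁) ∨
    (s = .bot ∧ TAct.valid (GP.A ∪ GQ.A) α ∧ s' = .bot) ∨
    (s = .top ∧ TAct.isDelay α ∧ s' = .top)

/-- Projection of a timed word onto a sub-alphabet: delete visible actions outside
the sub-alphabet and coalesce adjacent delays. -/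
noncomputable def projW {Act : Type} (A : Set Act) (w : TWord Act) : TWord Act :=
  w.foldr (fun α acc =>
    match α with
    | TAct.act a => if a ∈ A then tcat [TAct.act a] acc else acc
    | TAct.delay d => tcat [TAct.delay d] acc) []


section AuxProofs

variable {Act : Type}

variable {Act : Type}

lemma dsum_assoc (a b c : Delay) : dsum (dsum a b) c = dsum a (dsum b c) :=
  Subtype.ext (add_assoc _ _ _)

lemma tcat_nil (w : TWord Act) : tcat w [] = w := by
  unfold tcat
  rcases h : w.getLast? with _ | α
  · simp
  · cases α <;> simp

lemma nil_tcat (w : TWord Act) : tcat [] w = w := by unfold tcat; simp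

lemma tcat_act_cons (a : Act) (v : TWord Act) : tcat [TAct.act a] v = TAct.act a :: v := by
  unfold tcat; simp

lemma tcat_delay_delay (d e : Delay) (r : TWord Act) :
    tcat [TAct.delay d] (TAct.delay e :: r) = TAct.delay (dsum d e) :: r := by
  unfold tcat; simp

lemma tcat_delay_nil (d : Delay) : tcat [TAct.delay d] ([] : TWord Act) = [TAct.delay d] := by
  unfold tcat; simp

lemma tcat_delay_act (d : Delay) (a : Act) (r : TWord Act) :
    tcat [TAct.delay d] (TAct.act a :: r) = TAct.delay d :: TAct.act a :: r := by
  unfold tcat; simp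

lemma tcat_cons {u : TWord Act} (b : TAct Act) (h : u ≠ []) (v : TWord Act) :
    tcat (b :: u) v = b :: tcat u v := by
  rcases u with _ | ⟨c, u⟩
  · exact absurd rfl h
  · unfold tcat
    rw [List.getLast?_cons_cons]
    rcases hl : (c :: u).getLast? with _ | α
    · simp at hl
    · cases α with
      | act a => rcases v with _ | ⟨β, r⟩ <;> simp
      | delay d =>
        rcases v with _ | ⟨β, r⟩
        · simp
        · cases β <;> simp

lemma tcat_assocL (α : TAct Act) (u v : TWord Act) :
    tcat (tcat [α] u) v = tcat [α] (tcat u v) := by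
  rcases u with _ | ⟨x, u⟩
  · rw [tcat_nil, nil_tcat]
  rcases u with _ | ⟨y, u⟩
  · -- u = [x]
    cases α with
    | act a =>
      rw [tcat_act_cons, tcat_cons _ (by simp), tcat_act_cons]
    | delay d =>
      cases x with
      | act b =>
        rw [tcat_delay_act, tcat_cons _ (by simp), tcat_act_cons, tcat_delay_act]
      | delay e =>
        rw [tcat_delay_delay]
        rcases v with _ | ⟨β, r⟩
        · rw [tcat_nil, tcat_nil, tcat_delay_delay]
        · cases β with
          | act c =>
            rw [tcat_delay_act, tcat_delay_act, tcat_delay_delay]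
          | delay f =>
            rw [tcat_delay_delay, tcat_delay_delay, tcat_delay_delay, dsum_assoc]
  · -- u = x :: y :: u
    have hne : (y :: u : TWord Act) ≠ [] := by simp
    cases α with
    | act a =>
      rw [tcat_act_cons, tcat_cons _ (by simp), tcat_act_cons, tcat_cons _ hne]
    | delay d =>
      cases x with
      | act b =>
        rw [tcat_delay_act, tcat_cons _ (by simp), tcat_cons _ hne, tcat_delay_act]
      | delay e =>
        rw [tcat_delay_delay, tcat_cons _ hne, tcat_cons _ hne, tcat_delay_delay]

lemma tcat_ne_nil_left {u : TWord Act} (h : u ≠ []) (v : TWord Act) : tcat u v ≠ [] := by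
  unfold tcat
  rcases hl : u.getLast? with _ | α
  · simp [h]
  · cases α with
    | act a => simp [h]
    | delay d =>
      rcases v with _ | ⟨β, r⟩
      · simp [h]
      · cases β <;> simp [h]

lemma tcat_assoc (u v w : TWord Act) : tcat (tcat u v) w = tcat u (tcat v w) := by
  induction u with
  | nil => rw [nil_tcat, nil_tcat]
  | cons x u ih =>
    rcases u with _ | ⟨y, u⟩
    · exact tcat_assocL x v w
    · have hne : (y :: u : TWord Act) ≠ [] := by simp
      rw [tcat_cons _ hne, tcat_cons _ (tcat_ne_nil_left hne v),
        tcat_cons _ hne, ih]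

variable {Act : Type}

lemma tcat_single_eq {α β : TAct Act} {w₁ w₂ : TWord Act}
    (h : tcat [α] w₁ = tcat [β] w₂) :
    (α = β ∧ w₁ = w₂) ∨
    (∃ d e f : Delay, α = .delay d ∧ β = .delay e ∧ e = dsum d f ∧
      w₁ = tcat [TAct.delay f] w₂) ∨
    (∃ d e f : Delay, α = .delay d ∧ β = .delay e ∧ d = dsum e f ∧
      w₂ = tcat [TAct.delay f] w₁) := by
  have hd : ∀ (d : Delay) (w : TWord Act), (∀ u r, w ≠ TAct.delay u :: r) →
      tcat [TAct.delay d] w = TAct.delay d :: w := by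
    intro d w hw
    rcases w with _ | ⟨β, r⟩
    · exact tcat_delay_nil d
    · cases β with
      | act a => exact tcat_delay_act d a r
      | delay u => exact absurd rfl (hw u r)
  cases α with
  | act a =>
    cases β with
    | act b =>
      rw [tcat_act_cons, tcat_act_cons] at h
      obtain ⟨h1, h2⟩ := List.cons.inj h
      exact Or.inl ⟨h1, h2⟩
    | delay e =>
      exfalso
      rw [tcat_act_cons] at h
      rcases w₂ with _ | ⟨γ, r⟩
      · rw [tcat_delay_nil] at h; exact nomatch (List.cons.inj h).1
      · cases γ with
        | act b => rw [tcat_delay_act] at h; exact nomatch (List.cons.inj h).1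
        | delay u => rw [tcat_delay_delay] at h; exact nomatch (List.cons.inj h).1
  | delay d =>
    cases β with
    | act b =>
      exfalso
      rw [tcat_act_cons] at h
      rcases w₁ with _ | ⟨γ, r⟩
      · rw [tcat_delay_nil] at h; exact nomatch (List.cons.inj h).1
      · cases γ with
        | act c => rw [tcat_delay_act] at h; exact nomatch (List.cons.inj h).1
        | delay u => rw [tcat_delay_delay] at h; exact nomatch (List.cons.inj h).1
    | delay e =>
      by_cases h₁ : ∃ u r₁, w₁ = TAct.delay u :: r₁
      · obtain ⟨u, r₁, rfl⟩ := h₁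
        rw [tcat_delay_delay] at h
        by_cases h₂ : ∃ v r₂, w₂ = TAct.delay v :: r₂
        · obtain ⟨v, r₂, rfl⟩ := h₂
          rw [tcat_delay_delay] at h
          have h1 : dsum d u = dsum e v := TAct.delay.inj (List.cons.inj h).1
          have h2 : r₁ = r₂ := (List.cons.inj h).2
          have harith : d.1 + u.1 = e.1 + v.1 := congrArg Subtype.val h1
          rcases lt_trichotomy d.1 e.1 with hlt | heq | hgt
          · refine Or.inr (Or.inl ⟨d, e, ⟨e.1 - d.1, by linarith⟩, rfl, rfl, ?_, ?_⟩)
            · exact Subtype.ext (by simp [dsum])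
            · rw [tcat_delay_delay, h2]
              exact congrArg (· :: r₂) (congrArg TAct.delay (Subtype.ext (by simp [dsum]; linarith)))
          · have : d = e := Subtype.ext heq
            subst this
            have : u = v := Subtype.ext (by linarith)
            subst this
            exact Or.inl ⟨rfl, by rw [h2]⟩
          · refine Or.inr (Or.inr ⟨d, e, ⟨d.1 - e.1, by linarith⟩, rfl, rfl, ?_, ?_⟩)
            · exact Subtype.ext (by simp [dsum])
            · rw [tcat_delay_delay, ← h2]
              exact congrArg (· :: r₁) (congrArg TAct.delay (Subtype.ext (by simp [dsum]; linarith)))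
        · have hw₂ : ∀ v r, w₂ ≠ TAct.delay v :: r := fun v r hc => h₂ ⟨v, r, hc⟩
          rw [hd e w₂ hw₂] at h
          have h1 : dsum d u = e := TAct.delay.inj (List.cons.inj h).1
          have h2 : r₁ = w₂ := (List.cons.inj h).2
          refine Or.inr (Or.inl ⟨d, e, u, rfl, rfl, h1.symm, ?_⟩)
          rw [hd u w₂ hw₂, h2]
      · have hw₁ : ∀ u r, w₁ ≠ TAct.delay u :: r := by
          intro u r hc; exact h₁ ⟨u, r, hc⟩
        rw [hd d w₁ hw₁] at h
        by_cases h₂ : ∃ v r₂, w₂ = TAct.delay v :: r₂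
        · obtain ⟨v, r₂, rfl⟩ := h₂
          rw [tcat_delay_delay] at h
          have h1 : d = dsum e v := by
            have := (List.cons.inj h).1; cases this; rfl
          have h2 : w₁ = r₂ := (List.cons.inj h).2
          refine Or.inr (Or.inr ⟨d, e, v, rfl, rfl, h1, ?_⟩)
          rw [hd v w₁ hw₁, h2]
        · have hw₂ : ∀ u r, w₂ ≠ TAct.delay u :: r := by
            intro u r hc; exact h₂ ⟨u, r, hc⟩
          rw [hd e w₂ hw₂] at h
          have h1 := (List.cons.inj h).1
          have h2 := (List.cons.inj h).2
          cases h1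
          exact Or.inl ⟨rfl, h2⟩

lemma mem_tcat_single {β α : TAct Act} {u : TWord Act} (h : β ∈ tcat [α] u) :
    β = α ∨ β ∈ u ∨ TAct.isDelay β := by
  cases α with
  | act a => rw [tcat_act_cons] at h; rcases List.mem_cons.1 h with h | h
             · exact Or.inl h
             · exact Or.inr (Or.inl h)
  | delay d =>
    rcases u with _ | ⟨γ, r⟩
    · rw [tcat_delay_nil] at h
      exact Or.inl (List.mem_singleton.1 h)
    · cases γ with
      | act b =>
        rw [tcat_delay_act] at h
        rcases List.mem_cons.1 h with h | h
        · exact Or.inl h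
        · exact Or.inr (Or.inl h)
      | delay e =>
        rw [tcat_delay_delay] at h
        rcases List.mem_cons.1 h with h | h
        · subst h; exact Or.inr (Or.inr trivial)
        · exact Or.inr (Or.inl (List.mem_cons_of_mem _ h))

lemma wf_tail {b : TAct Act} {v : TWord Act} (h : IsTWord (b :: v)) : IsTWord v :=
  List.IsChain.tail h

lemma wf_not_dd {d : Delay} {e : Delay} {r : TWord Act}
    (h : IsTWord (TAct.delay d :: TAct.delay e :: r)) : False := by
  have := List.isChain_cons_cons.1 h
  exact this.1 ⟨trivial, trivial⟩

lemma wf_dhead {d c : Delay} {v : TWord Act} (h : IsTWord (TAct.delay d :: v)) :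
    IsTWord (TAct.delay c :: v) := by
  rcases v with _ | ⟨x, r⟩
  · exact List.isChain_singleton _
  · exact List.isChain_cons_cons.2 ⟨(List.isChain_cons_cons.1 h).1, (List.isChain_cons_cons.1 h).2⟩

lemma wf_tcat_single {α : TAct Act} {u : TWord Act} (h : IsTWord u) :
    IsTWord (tcat [α] u) := by
  cases α with
  | act a =>
    rw [tcat_act_cons]
    rcases u with _ | ⟨x, r⟩
    · exact List.isChain_singleton _
    · exact List.isChain_cons_cons.2 ⟨fun hc => hc.1, h⟩
  | delay d =>
    rcases u with _ | ⟨x, r⟩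
    · rw [tcat_delay_nil]; exact List.isChain_singleton _
    · cases x with
      | act b =>
        rw [tcat_delay_act]
        exact List.isChain_cons_cons.2 ⟨fun hc => hc.2, h⟩
      | delay e =>
        rw [tcat_delay_delay]
        exact wf_dhead h

lemma tcat_single_ne_nil (α : TAct Act) (w : TWord Act) : tcat [α] w ≠ [] := by
  unfold tcat
  cases α with
  | act a => simp
  | delay d =>
    rcases w with _ | ⟨β, r⟩
    · simp
    · cases β <;> simp

inductive ExecN (P : TIOTS Act) : ℕ → St P.Sig → TWord Act → St P.Sig → Prop where
  | nil (s : St P.Sig) : ExecN P 0 s [] s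
  | cons {s : St P.Sig} {α : TAct Act} {s' : St P.Sig} {w : TWord Act} {s'' : St P.Sig}
      {n : ℕ} : P.tr s α s' → ExecN P n s' w s'' → ExecN P (n + 1) s (tcat [α] w) s''

lemma exec_iff_execN {P : TIOTS Act} {s : St P.Sig} {w : TWord Act} {t : St P.Sig} :
    Exec P s w t ↔ ∃ n, ExecN P n s w t := by
  constructor
  · intro h
    induction h with
    | nil s => exact ⟨0, ExecN.nil s⟩
    | cons h₁ _ ih => obtain ⟨n, hn⟩ := ih; exact ⟨n + 1, ExecN.cons h₁ hn⟩
  · rintro ⟨n, h⟩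
    induction h with
    | nil s => exact Exec.nil s
    | cons h₁ _ ih => exact Exec.cons h₁ ih

lemma execN_nil_aux {P : TIOTS Act} {n : ℕ} {s : St P.Sig} {w : TWord Act} {t : St P.Sig}
    (h : ExecN P n s w t) (hw : w = []) : s = t ∧ n = 0 := by
  cases h with
  | nil => exact ⟨rfl, rfl⟩
  | cons h₁ h₂ => exact absurd hw (tcat_single_ne_nil _ _)

lemma execN_nil {P : TIOTS Act} {n : ℕ} {s t : St P.Sig} (h : ExecN P n s [] t) :
    s = t ∧ n = 0 := execN_nil_aux h rfl

lemma exec_wf {P : TIOTS Act} {s : St P.Sig} {w : TWord Act} {t : St P.Sig}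
    (h : Exec P s w t) : IsTWord w := by
  induction h with
  | nil => exact List.isChain_nil
  | cons _ _ ih => exact wf_tcat_single ih

lemma exec_valid {P : TIOTS Act} {A : Set Act}
    (hval : ∀ s α s', P.tr s α s' → TAct.valid A α)
    {s : St P.Sig} {w : TWord Act} {t : St P.Sig} (h : Exec P s w t) :
    ∀ β ∈ w, TAct.valid A β := by
  induction h with
  | nil => intro β hβ; exact absurd hβ (List.not_mem_nil)
  | cons h₁ _ ih =>
    intro β hβ
    rcases mem_tcat_single hβ with rfl | hβ | hβ
    · exact hval _ _ _ h₁
    · exact ih β hβ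
    · cases β with
      | act a => exact absurd hβ id
      | delay d => trivial

lemma exec_append {P : TIOTS Act} {s : St P.Sig} {u : TWord Act} {t : St P.Sig}
    {v : TWord Act} {r : St P.Sig} (h₁ : Exec P s u t) (h₂ : Exec P t v r) :
    Exec P s (tcat u v) r := by
  induction h₁ with
  | nil => rwa [nil_tcat]
  | cons hstep _ ih =>
    rw [tcat_assocL]
    exact Exec.cons hstep (ih h₂)

lemma exec_single {P : TIOTS Act} {s : St P.Sig} {α : TAct Act} {s' : St P.Sig}
    (h : P.tr s α s') : Exec P s [α] s' := by
  have := Exec.cons h (Exec.nil s')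
  rwa [tcat_nil] at this

lemma exec_snoc {P : TIOTS Act} {s : St P.Sig} {u : TWord Act} {t : St P.Sig}
    {α : TAct Act} {t' : St P.Sig} (h₁ : Exec P s u t) (h₂ : P.tr t α t') :
    Exec P s (tcat u [α]) t' :=
  exec_append h₁ (exec_single h₂)

variable {Act : Type}

lemma wf_cons_tcat {α : TAct Act} {v : TWord Act} (h : IsTWord (α :: v)) :
    tcat [α] v = α :: v := by
  cases α with
  | act a => exact tcat_act_cons a v
  | delay d =>
    rcases v with _ | ⟨β, r⟩
    · exact tcat_delay_nil d
    · cases β with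
      | act b => exact tcat_delay_act d b r
      | delay e => exact absurd h (fun hh => wf_not_dd hh)

lemma ctr_iff {P : TIOTS Act} {s : St P.Sig} {α : TAct Act} {s' : St P.Sig} :
    P.complete.tr s α s' ↔
      (P.tr s α s' ∨
        ((∃ p, s = .plain p) ∧ (∃ a ∈ P.I, α = .act a) ∧ ¬ enabled P s α ∧ s' = .bot) ∨
        ((∃ p, s = .plain p) ∧ TAct.valid P.O α ∧ ¬ enabled (botComplete P) s α ∧
          s' = .top)) := by
  exact or_assoc

lemma btr_delay {P : TIOTS Act} {s : St P.Sig} {d : Delay} {s' : St P.Sig} :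
    (botComplete P).tr s (.delay d) s' ↔ P.tr s (.delay d) s' := by
  constructor
  · rintro (h | ⟨_, ⟨a, _, ha⟩, _⟩)
    · exact h
    · exact absurd ha (fun hh => nomatch hh)
  · exact Or.inl

lemma benabled_delay {P : TIOTS Act} {s : St P.Sig} {d : Delay} :
    enabled (botComplete P) s (.delay d) ↔ enabled P s (.delay d) := by
  unfold enabled
  exact exists_congr fun s' => btr_delay

lemma ctr_top {P : TIOTS Act} (hP : WF P) {α : TAct Act} {s' : St P.Sig} :
    P.complete.tr .top α s' ↔ (TAct.isDelay α ∧ s' = .top) := by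
  refine ctr_iff.trans ?_
  constructor
  · rintro (h | ⟨⟨p, hp⟩, _⟩ | ⟨⟨p, hp⟩, _⟩)
    · exact (hP.2.2.1 α s').1 h
    · exact nomatch hp
    · exact nomatch hp
  · intro h; exact Or.inl ((hP.2.2.1 α s').2 h)

lemma ctr_bot {P : TIOTS Act} (hP : WF P) {α : TAct Act} {s' : St P.Sig} :
    P.complete.tr .bot α s' ↔ (TAct.valid P.A α ∧ s' = .bot) := by
  refine ctr_iff.trans ?_
  constructor
  · rintro (h | ⟨⟨p, hp⟩, _⟩ | ⟨⟨p, hp⟩, _⟩)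
    · exact (hP.2.2.2.1 α s').1 h
    · exact nomatch hp
    · exact nomatch hp
  · intro h; exact Or.inl ((hP.2.2.2.1 α s').2 h)

lemma valid_mono {A B : Set Act} (h : A ⊆ B) {α : TAct Act} (hv : TAct.valid A α) :
    TAct.valid B α := by
  cases α with
  | act a => exact h hv
  | delay d => trivial

lemma ctr_valid {P : TIOTS Act} (hP : WF P) {s : St P.Sig} {α : TAct Act} {s' : St P.Sig}
    (h : P.complete.tr s α s') : TAct.valid P.A α := by
  rcases ctr_iff.1 h with h | ⟨_, ⟨a, ha, rfl⟩, _⟩ | ⟨_, hv, _⟩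
  · exact hP.2.1 _ _ _ h
  · exact Set.mem_union_left _ ha
  · exact valid_mono Set.subset_union_right hv

lemma ctot {P : TIOTS Act} (hP : WF P) (p : P.Sig) {α : TAct Act}
    (hv : TAct.valid P.A α) : ∃ s', P.complete.tr (.plain p) α s' := by
  by_cases he : enabled P (.plain p) α
  · obtain ⟨s', hs'⟩ := he
    exact ⟨s', ctr_iff.2 (Or.inl hs')⟩
  · cases α with
    | act a =>
      rcases hv with ha | ha
      · exact ⟨.bot, ctr_iff.2 (Or.inr (Or.inl ⟨⟨p, rfl⟩, ⟨a, ha, rfl⟩, he, rfl⟩))⟩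
      · refine ⟨.top, ctr_iff.2 (Or.inr (Or.inr ⟨⟨p, rfl⟩, ha, ?_, rfl⟩))⟩
        rintro ⟨s', hs' | ⟨_, ⟨b, hb, hab⟩, _, _⟩⟩
        · exact he ⟨s', hs'⟩
        · cases hab
          exact hP.1.le_bot ⟨hb, ha⟩
    | delay d =>
      refine ⟨.top, ctr_iff.2 (Or.inr (Or.inr ⟨⟨p, rfl⟩, trivial, ?_, rfl⟩))⟩
      refine benabled_delay.not.2 ?_
      exact he

lemma csplit {P : TIOTS Act} (hP : WF P) {p : P.Sig} {d e : Delay} {s' : St P.Sig}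
    (h : P.complete.tr (.plain p) (.delay (dsum d e)) s') :
    ∃ m, P.complete.tr (.plain p) (.delay d) m ∧ P.complete.tr m (.delay e) s' := by
  rcases ctr_iff.1 h with h | ⟨_, ⟨a, _, ha⟩, _⟩ | ⟨_, _, hne, rfl⟩
  · obtain ⟨m, h₁, h₂⟩ := (hP.2.2.2.2 p d e s').1 h
    exact ⟨m, ctr_iff.2 (Or.inl h₁), ctr_iff.2 (Or.inl h₂)⟩
  · exact absurd ha (fun hh => nomatch hh)
  · -- timestop completion case
    replace hne := benabled_delay.not.1 hne
    by_cases hd : enabled P (.plain p) (.delay d)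
    · obtain ⟨m, hm⟩ := hd
      -- m cannot be ⊤ or ⊥ with e enabled, else composition contradicts hne
      cases m with
      | top =>
        refine ⟨.top, ctr_iff.2 (Or.inl hm), ctr_iff.2 (Or.inl ?_)⟩
        exact (hP.2.2.1 _ _).2 ⟨trivial, rfl⟩
      | bot =>
        exfalso
        refine hne ⟨.bot, (hP.2.2.2.2 p d e .bot).2 ⟨.bot, hm, ?_⟩⟩
        exact (hP.2.2.2.1 _ _).2 ⟨trivial, rfl⟩
      | plain q =>
        have hq : ¬ enabled P (.plain q) (.delay e) := by
          rintro ⟨r, hr⟩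
          exact hne ⟨r, (hP.2.2.2.2 p d e r).2 ⟨.plain q, hm, hr⟩⟩
        refine ⟨.plain q, ctr_iff.2 (Or.inl hm), ctr_iff.2 (Or.inr (Or.inr ?_))⟩
        refine ⟨⟨q, rfl⟩, trivial, ?_, rfl⟩
        refine benabled_delay.not.2 ?_
        exact hq
    · refine ⟨.top, ctr_iff.2 (Or.inr (Or.inr ⟨⟨p, rfl⟩, trivial, ?_, rfl⟩)),
        ctr_iff.2 (Or.inl ((hP.2.2.1 _ _).2 ⟨trivial, rfl⟩))⟩
      refine benabled_delay.not.2 ?_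
      exact hd

lemma exec_bot_fix {Q : TIOTS Act} (hb : ∀ (α : TAct Act) (s' : St Q.Sig), Q.tr .bot α s' → s' = .bot)
    {s : St Q.Sig} {w : TWord Act} {t : St Q.Sig} (h : Exec Q s w t) (hs : s = .bot) :
    t = .bot := by
  induction h with
  | nil => exact hs
  | cons h₁ _ ih =>
    subst hs
    exact ih (hb _ _ h₁)

lemma cexec_bot {P : TIOTS Act} (hP : WF P) {w : TWord Act} {t : St P.Sig}
    (h : Exec P.complete .bot w t) : t = .bot :=
  exec_bot_fix (fun α s' hh => ((ctr_bot hP).1 hh).2) h rfl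

lemma exec_top_fix {Q : TIOTS Act}
    (hb : ∀ (β : TAct Act) (r : St Q.Sig), Q.tr .top β r → TAct.isDelay β ∧ r = .top)
    {s : St Q.Sig} {w : TWord Act} {t : St Q.Sig} (h : Exec Q s w t) (hs : s = .top) :
    t = .top ∧ (w = [] ∨ ∃ d, w = [TAct.delay d]) := by
  induction h with
  | nil => exact ⟨hs, Or.inl rfl⟩
  | @cons s α s' w' s'' h₁ h₂ ih =>
    subst hs
    obtain ⟨hd, rfl⟩ := hb _ _ h₁
    obtain ⟨ht, hw⟩ := ih rfl
    cases α with
    | act a => exact absurd hd id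
    | delay d =>
      refine ⟨ht, Or.inr ?_⟩
      rcases hw with rfl | ⟨e, rfl⟩
      · exact ⟨d, tcat_delay_nil d⟩
      · exact ⟨dsum d e, tcat_delay_delay d e []⟩

lemma cexec_top {P : TIOTS Act} (hP : WF P) {w : TWord Act} {t : St P.Sig}
    (h : Exec P.complete .top w t) : t = .top ∧ (w = [] ∨ ∃ d, w = [TAct.delay d]) :=
  exec_top_fix (Q := P.complete) (fun α s_ hh => (ctr_top hP).1 hh) h rfl

lemma chaotic_exec {P : TIOTS Act} (hP : WF P) {v : TWord Act} (hwf : IsTWord v)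
    (hv : ∀ β ∈ v, TAct.valid P.A β) : Exec P.complete .bot v .bot := by
  induction v with
  | nil => exact Exec.nil _
  | cons α v' ih =>
    have h₁ : P.complete.tr .bot α .bot :=
      (ctr_bot hP).2 ⟨hv α (List.mem_cons_self), rfl⟩
    have h₂ := ih (wf_tail hwf) (fun β hβ => hv β (List.mem_cons_of_mem _ hβ))
    have := Exec.cons h₁ h₂
    rwa [wf_cons_tcat hwf] at this

variable {Act : Type}

lemma stPar_top_left {σ₀ σ₁ : Type} (t : St σ₁) : stPar (.top : St σ₀) t = .top := by
  cases t <;> rfl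

lemma stPar_top_right {σ₀ σ₁ : Type} (s : St σ₀) : stPar s (.top : St σ₁) = .top := by
  cases s <;> rfl

lemma stPar_tri {σ₀ σ₁ : Type} (s : St σ₀) (t : St σ₁) :
    stPar s t = .top ∨ stPar s t = .bot ∨
      (∃ p q, s = .plain p ∧ t = .plain q ∧ stPar s t = .plain (pairSt p q)) := by
  cases s <;> cases t <;>
    first
      | exact Or.inl rfl
      | exact Or.inr (Or.inl rfl)
      | exact Or.inr (Or.inr ⟨_, _, rfl, rfl, rfl⟩)

lemma stPar_eq_bot {σ₀ σ₁ : Type} {x : St σ₀} {y : St σ₁} (h : stPar x y = .bot) :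
    (x = .bot ∧ (y = .bot ∨ ∃ r, y = .plain r)) ∨ ((∃ r, x = .plain r) ∧ y = .bot) := by
  cases x <;> cases y <;>
    first
      | exact absurd h (fun hh => St.noConfusion rfl (heq_of_eq hh))
      | exact Or.inl ⟨rfl, Or.inl rfl⟩
      | exact Or.inl ⟨rfl, Or.inr ⟨_, rfl⟩⟩
      | exact Or.inr ⟨⟨_, rfl⟩, rfl⟩

lemma env_A {P Q : TIOTS Act} (hE : Env P Q) : Q.A = P.A := by
  unfold TIOTS.A
  rw [hE.1, hE.2, Set.union_comm]

/-- Synchronised pairs of executions of the completions of `P` and `Q`. -/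
inductive DPExec (P Q : TIOTS Act) : St P.Sig × St Q.Sig → TWord Act → St P.Sig × St Q.Sig → Prop where
  | nil (st : St P.Sig × St Q.Sig) : DPExec P Q st [] st
  | cons {p : P.Sig} {q : Q.Sig} {α : TAct Act} {s₀ : St P.Sig} {s₁ : St Q.Sig}
      {w : TWord Act} {e : St P.Sig × St Q.Sig} :
      P.complete.tr (.plain p) α s₀ → Q.complete.tr (.plain q) α s₁ →
      DPExec P Q (s₀, s₁) w e → DPExec P Q (.plain p, .plain q) (tcat [α] w) e

lemma dpexec_execs {P Q : TIOTS Act} {st : St P.Sig × St Q.Sig} {w : TWord Act}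
    {e : St P.Sig × St Q.Sig} (h : DPExec P Q st w e) :
    Exec P.complete st.1 w e.1 ∧ Exec Q.complete st.2 w e.2 := by
  induction h with
  | nil => exact ⟨Exec.nil _, Exec.nil _⟩
  | cons h₀ h₁ _ ih => exact ⟨Exec.cons h₀ ih.1, Exec.cons h₁ ih.2⟩

lemma dpexec_nonplain {P Q : TIOTS Act} {s : St P.Sig} {t : St Q.Sig} {w : TWord Act}
    {e : St P.Sig × St Q.Sig} (h : DPExec P Q (s, t) w e)
    (hs : (∀ p, s ≠ .plain p) ∨ (∀ q, t ≠ .plain q)) : w = [] ∧ e = (s, t) := by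
  cases h with
  | nil => exact ⟨rfl, rfl⟩
  | cons h₀ h₁ h₂ =>
    rcases hs with hs | hs
    · exact absurd rfl (hs _)
    · exact absurd rfl (hs _)

lemma par_step_top {P Q : TIOTS Act} {α : TAct Act} {m : St (parC P Q).Sig}
    (h : (parC P Q).tr .top α m) : TAct.isDelay α ∧ m = .top := by
  rcases h with ⟨p, s₀, hp, _⟩ | ⟨q, s₁, hp, _⟩ | ⟨p, q, hp, _⟩ | ⟨hp, _⟩ | ⟨_, hd, rfl⟩
  · exact nomatch hp
  · exact nomatch hp
  · exact nomatch hp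
  · exact nomatch hp
  · exact ⟨hd, rfl⟩

lemma par_step_bot {P Q : TIOTS Act} {α : TAct Act} {m : St (parC P Q).Sig}
    (h : (parC P Q).tr .bot α m) : m = .bot := by
  rcases h with ⟨p, s₀, hp, _⟩ | ⟨q, s₁, hp, _⟩ | ⟨p, q, hp, _⟩ | ⟨_, _, rfl⟩ | ⟨hp, _⟩
  · exact nomatch hp
  · exact nomatch hp
  · exact nomatch hp
  · rfl
  · exact nomatch hp

lemma par_sync_valid {P Q : TIOTS Act} (hP : WF P) (hQ : WF Q) {p : P.Sig} {q : Q.Sig}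
    {α : TAct Act} {s₀ : St P.Sig} {s₁ : St Q.Sig}
    (h₀ : P.complete.tr (.plain p) α s₀) (h₁ : Q.complete.tr (.plain q) α s₁) :
    TAct.valid (P.complete.A ∩ Q.complete.A) α := by
  cases α with
  | act a => exact ⟨ctr_valid hP h₀, ctr_valid hQ h₁⟩
  | delay d => trivial

lemma par_sync {P Q : TIOTS Act} (hP : WF P) (hQ : WF Q) {p : P.Sig} {q : Q.Sig}
    {α : TAct Act} {s₀ : St P.Sig} {s₁ : St Q.Sig}
    (h₀ : P.complete.tr (.plain p) α s₀) (h₁ : Q.complete.tr (.plain q) α s₁) :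
    (parC P Q).tr (.plain (pairSt p q)) α (stPar s₀ s₁) :=
  Or.inr (Or.inr (Or.inl ⟨p, q, rfl,
    Or.inl ⟨par_sync_valid hP hQ h₀ h₁, s₀, s₁, h₀, h₁, rfl⟩⟩))

lemma parA {P Q : TIOTS Act} (hE : Env P Q) {st : St (parC P Q).Sig} {w : TWord Act}
    {c : St (parC P Q).Sig} (h : Exec (parC P Q) st w c) :
    ∀ (s : St P.Sig) (t : St Q.Sig), st = stPar s t →
      (∃ s' t', c = stPar s' t' ∧ DPExec P Q (s, t) w (s', t')) ∨
      (c = .bot ∧ ∃ u s' t', DPExec P Q (s, t) u (s', t') ∧ stPar s' t' = .bot) ∨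
      c = .top := by
  induction h with
  | nil s0 =>
    intro s t hst
    exact Or.inl ⟨s, t, hst, DPExec.nil _⟩
  | @cons s0 α m w' c htr hrest ih =>
    intro s t hst
    subst hst
    rcases stPar_tri s t with htop | hbot | ⟨p, q, rfl, rfl, hpl⟩
    · -- composite ⊤
      rw [htop] at htr
      obtain ⟨_, rfl⟩ := par_step_top htr
      exact Or.inr (Or.inr (exec_top_fix (fun β r hh => par_step_top hh) hrest rfl).1)
    · -- composite ⊥
      rw [hbot] at htr
      have hm : m = .bot := par_step_bot htr
      subst hm
      have hc : c = .bot := exec_bot_fix (fun β r hh => par_step_bot hh) hrest rfl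
      exact Or.inr (Or.inl ⟨hc, [], s, t, DPExec.nil _, hbot⟩)
    · -- composite plain pair
      rw [hpl] at htr
      rcases htr with ⟨p', s₀, hp, _⟩ | ⟨q', s₁, hp, _⟩ |
        ⟨p', q', hp, hcases⟩ | ⟨hp, _⟩ | ⟨hp, _⟩
      · exact absurd (St.plain.inj hp) (by intro hh; injection hh)
      · exact absurd (St.plain.inj hp) (by
          intro hh
          injection hh with hh'
          injection hh')
      · have hpq : p' = p ∧ q' = q := by
          have := St.plain.inj hp
          simp only [pairSt] at this
          obtain ⟨h1, h2⟩ := Prod.mk.inj (Sum.inr.inj (Sum.inr.inj this))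
          exact ⟨h1.symm, h2.symm⟩
        obtain ⟨rfl, rfl⟩ := hpq
        rcases hcases with ⟨hv, s₀, s₁, h₀, h₁, rfl⟩ | ⟨a, rfl, ha, _⟩ | ⟨a, rfl, ha, _⟩
        · rcases ih s₀ s₁ rfl with ⟨s', t', rfl, hdp⟩ | ⟨hc, u, s', t', hdp, hb⟩ | hc
          · exact Or.inl ⟨s', t', rfl, DPExec.cons h₀ h₁ hdp⟩
          · exact Or.inr (Or.inl ⟨hc, tcat [α] u, s', t', DPExec.cons h₀ h₁ hdp, hb⟩)
          · exact Or.inr (Or.inr hc)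
        · exfalso
          have h1 : a ∈ P.I ∪ P.O := ha.1
          have h2 : a ∉ Q.I ∪ Q.O := ha.2
          rw [hE.1, hE.2, Set.union_comm] at h2
          exact h2 h1
        · exfalso
          have h1 : a ∈ Q.I ∪ Q.O := ha.1
          have h2 : a ∉ P.I ∪ P.O := ha.2
          rw [hE.1, hE.2, Set.union_comm] at h1
          exact h2 h1
      · exact absurd hp (fun hh => nomatch hh)
      · exact absurd hp (fun hh => nomatch hh)

lemma par_bot_extract {P Q : TIOTS Act} (hE : Env P Q) (h : ¬ BotFree (parC P Q)) :
    ∃ u x y, DPExec P Q (P.init, Q.init) u (x, y) ∧ stPar x y = .bot := by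
  unfold BotFree at h
  push_neg at h
  obtain ⟨w, hw⟩ := h
  rcases parA hE hw P.init Q.init rfl with ⟨s', t', hc, hdp⟩ | ⟨_, u, s', t', hdp, hb⟩ | hc
  · exact ⟨w, s', t', hdp, hc.symm⟩
  · exact ⟨u, s', t', hdp, hb⟩
  · exact absurd hc (fun hh => nomatch hh)

lemma execN_zero {P : TIOTS Act} {s : St P.Sig} {w : TWord Act} {t : St P.Sig}
    (h : ExecN P 0 s w t) : w = [] ∧ s = t := by
  cases h
  exact ⟨rfl, rfl⟩

lemma execN_succ {P : TIOTS Act} {n : ℕ} {s : St P.Sig} {w : TWord Act} {t : St P.Sig}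
    (h : ExecN P (n + 1) s w t) :
    ∃ α s' w', P.tr s α s' ∧ ExecN P n s' w' t ∧ w = tcat [α] w' := by
  cases h with
  | cons h₁ h₂ => exact ⟨_, _, _, h₁, h₂, rfl⟩

lemma parB' {P Q : TIOTS Act} (hP : WF P) (hQ : WF Q) (hE : Env P Q) :
    ∀ (k n m : ℕ) {w : TWord Act} {x : St P.Sig} {y : St Q.Sig} {sp : St P.Sig}
      {sq : St Q.Sig}, n + m ≤ k → ExecN P.complete n sp w x → ExecN Q.complete m sq w y →
      stPar x y = .bot → ∃ v, Exec (parC P Q) (stPar sp sq) v .bot := by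
  intro k
  induction k with
  | zero =>
    intro n m w x y sp sq hnm h1 h2 hb
    have hn : n = 0 := by omega
    have hm : m = 0 := by omega
    subst hn; subst hm
    obtain ⟨rfl, rfl⟩ := execN_zero h1
    obtain ⟨_, rfl⟩ := execN_zero h2
    exact ⟨[], hb ▸ Exec.nil _⟩
  | succ k ih =>
    intro n m w x y sp sq hnm h1 h2 hb
    cases sp with
    | top =>
      exfalso
      have := (cexec_top hP (exec_iff_execN.2 ⟨n, h1⟩)).1
      subst this
      rw [stPar_top_left] at hb
      exact nomatch hb
    | bot =>
      cases sq with
      | top =>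
        exfalso
        have := (cexec_top hQ (exec_iff_execN.2 ⟨m, h2⟩)).1
        subst this
        rw [stPar_top_right] at hb
        exact nomatch hb
      | bot => exact ⟨[], Exec.nil _⟩
      | plain q => exact ⟨[], Exec.nil _⟩
    | plain p =>
      cases sq with
      | top =>
        exfalso
        have := (cexec_top hQ (exec_iff_execN.2 ⟨m, h2⟩)).1
        subst this
        rw [stPar_top_right] at hb
        exact nomatch hb
      | bot => exact ⟨[], Exec.nil _⟩
      | plain q =>
        cases n with
        | zero =>
          obtain ⟨rfl, hx⟩ := execN_zero h1
          obtain ⟨hy, _⟩ := execN_nil h2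
          rw [← hy, ← hx] at hb
          exact absurd hb (fun hh => nomatch hh)
        | succ n' =>
          cases m with
          | zero =>
            obtain ⟨rfl, hy⟩ := execN_zero h2
            obtain ⟨hx, _⟩ := execN_nil h1
            rw [← hx, ← hy] at hb
            exact absurd hb (fun hh => nomatch hh)
          | succ m' =>
            obtain ⟨α, s₀, w₁, htrP, h1', hw1⟩ := execN_succ h1
            obtain ⟨β, t₀, w₂, htrQ, h2', hw2⟩ := execN_succ h2
            rw [hw1] at hw2
            rcases tcat_single_eq hw2 with ⟨rfl, rfl⟩ |
              ⟨d, e, f, rfl, rfl, hef, hws⟩ | ⟨d, e, f, rfl, rfl, hef, hws⟩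
            · -- same label: synchronise
              obtain ⟨v, hv⟩ := ih n' m' (by omega) h1' h2' hb
              exact ⟨tcat [α] v, Exec.cons (par_sync hP hQ htrP htrQ) hv⟩
            · -- P's delay shorter: split Q's step
              rw [hef] at htrQ
              obtain ⟨mid, hq1, hq2⟩ := csplit hQ htrQ
              have h2'' : ExecN Q.complete (m' + 1) mid (tcat [TAct.delay f] w₂) y :=
                ExecN.cons hq2 h2'
              rw [← hws] at h2''
              obtain ⟨v, hv⟩ := ih n' (m' + 1) (by omega) h1' h2'' hb
              exact ⟨tcat [TAct.delay d] v, Exec.cons (par_sync hP hQ htrP hq1) hv⟩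
            · -- Q's delay shorter: split P's step
              rw [hef] at htrP
              obtain ⟨mid, hp1, hp2⟩ := csplit hP htrP
              have h1'' : ExecN P.complete (n' + 1) mid (tcat [TAct.delay f] w₁) x :=
                ExecN.cons hp2 h1'
              rw [← hws] at h1''
              obtain ⟨v, hv⟩ := ih (n' + 1) m' (by omega) h1'' h2' hb
              exact ⟨tcat [TAct.delay e] v, Exec.cons (par_sync hP hQ hp1 htrQ) hv⟩

variable {Act : Type}

lemma parB {P Q : TIOTS Act} (hP : WF P) (hQ : WF Q) (hE : Env P Q) {w : TWord Act}
    (h : (w ∈ TEset P ∧ w ∈ TRset Q) ∨ (w ∈ TRset P ∧ w ∈ TEset Q)) :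
    ¬ BotFree (parC P Q) := by
  have key : ∃ (x : St P.Sig) (y : St Q.Sig), Exec P.complete P.complete.init w x ∧
      Exec Q.complete Q.complete.init w y ∧ stPar x y = .bot := by
    rcases h with ⟨h1, h2⟩ | ⟨h1, h2⟩
    · rcases h2 with h2 | ⟨r, h2⟩
      · exact ⟨.bot, .bot, h1, h2, rfl⟩
      · exact ⟨.bot, .plain r, h1, h2, rfl⟩
    · rcases h1 with h1 | ⟨r, h1⟩
      · exact ⟨.bot, .bot, h1, h2, rfl⟩
      · exact ⟨.plain r, .bot, h1, h2, rfl⟩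
  obtain ⟨x, y, h1, h2, hb⟩ := key
  obtain ⟨n, h1⟩ := exec_iff_execN.1 h1
  obtain ⟨m, h2⟩ := exec_iff_execN.1 h2
  obtain ⟨v, hv⟩ := parB' hP hQ hE (n + m) n m le_rfl h1 h2 hb
  intro hbf
  exact hbf v hv

lemma bot_extract_traces {P Q : TIOTS Act} (hE : Env P Q) (h : ¬ BotFree (parC P Q)) :
    ∃ u, (u ∈ TEset P ∧ u ∈ TRset Q) ∨ (u ∈ TRset P ∧ u ∈ TEset Q) := by
  obtain ⟨u, x, y, hdp, hb⟩ := par_bot_extract hE h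
  obtain ⟨hx, hy⟩ := dpexec_execs hdp
  rcases stPar_eq_bot hb with ⟨rfl, hy2⟩ | ⟨⟨r, rfl⟩, rfl⟩
  · refine ⟨u, Or.inl ⟨hx, ?_⟩⟩
    rcases hy2 with rfl | ⟨r, rfl⟩
    · exact Or.inl hy
    · exact Or.inr ⟨r, hy⟩
  · exact ⟨u, Or.inr ⟨Or.inr ⟨r, hx⟩, hy⟩⟩

lemma exec_to_top_gen {Q : TIOTS Act} {A : Set Act}
    (hTop : ∀ (α : TAct Act) (s' : St Q.Sig), Q.tr .top α s' → TAct.isDelay α ∧ s' = .top)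
    (hBot : ∀ (α : TAct Act) (s' : St Q.Sig), Q.tr .bot α s' → s' = .bot)
    (hVal : ∀ (s : St Q.Sig) (α : TAct Act) (s' : St Q.Sig), Q.tr s α s' → TAct.valid A α)
    {s : St Q.Sig} {w : TWord Act} {t : St Q.Sig} (h : Exec Q s w t) (ht : t = .top) :
    (s = .top ∧ (w = [] ∨ ∃ d, w = [TAct.delay d])) ∨
    ∃ u α p, Exec Q s u (.plain p) ∧ TAct.valid A α ∧
      (w = tcat u [α] ∨ ∃ d, w = tcat (tcat u [α]) [TAct.delay d]) := by
  induction h with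
  | nil s0 => exact Or.inl ⟨ht, Or.inl rfl⟩
  | @cons s0 α m w' c htr hrest ih =>
    rcases ih ht with ⟨rfl, hw'⟩ | ⟨u, α', p, hu, hva, hw'⟩
    · -- next state is ⊤
      cases s0 with
      | top =>
        obtain ⟨hd, _⟩ := hTop _ _ htr
        cases α with
        | act a => exact absurd hd id
        | delay d =>
          refine Or.inl ⟨rfl, Or.inr ?_⟩
          rcases hw' with rfl | ⟨e, rfl⟩
          · exact ⟨d, tcat_delay_nil d⟩
          · exact ⟨dsum d e, tcat_delay_delay d e []⟩
      | bot => exact absurd (hBot _ _ htr) (fun hh => nomatch hh)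
      | plain p =>
        refine Or.inr ⟨[], α, p, Exec.nil _, hVal _ _ _ htr, ?_⟩
        rcases hw' with rfl | ⟨e, rfl⟩
        · exact Or.inl (by rw [nil_tcat, tcat_nil])
        · exact Or.inr ⟨e, by rw [nil_tcat]⟩
    · cases s0 with
      | top =>
        obtain ⟨_, rfl⟩ := hTop _ _ htr
        obtain ⟨heq, _⟩ := exec_top_fix hTop hu rfl
        exact absurd heq (fun hh => nomatch hh)
      | bot =>
        have := hBot _ _ htr
        subst this
        exact absurd (exec_bot_fix hBot hu rfl) (fun hh => nomatch hh)
      | plain p₀ =>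
        refine Or.inr ⟨tcat [α] u, α', p, Exec.cons htr hu, hva, ?_⟩
        rcases hw' with rfl | ⟨e, rfl⟩
        · exact Or.inl (by rw [tcat_assocL])
        · exact Or.inr ⟨e, by rw [tcat_assocL, tcat_assocL]⟩

lemma TM_decomp {P : TIOTS Act} (hP : WF P) {w : TWord Act} (h : w ∈ TMset P) :
    (w = [] ∨ ∃ d, w = [TAct.delay d]) ∨
    ∃ u α, u ∈ TPset P ∧ TAct.valid P.A α ∧
      (w = tcat u [α] ∨ ∃ d, w = tcat (tcat u [α]) [TAct.delay d]) := by
  rcases exec_to_top_gen (Q := P.complete) (A := P.A)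
      (fun α s' hh => (ctr_top hP).1 hh) (fun α s' hh => ((ctr_bot hP).1 hh).2)
      (fun s α s' hh => ctr_valid hP hh) h rfl with ⟨_, hw⟩ | ⟨u, α, p, hu, hva, hw⟩
  · exact Or.inl hw
  · exact Or.inr ⟨u, α, ⟨p, hu⟩, hva, hw⟩

lemma TT_nil {P : TIOTS Act} : ([] : TWord Act) ∈ TTset P := by
  have h0 : Reach P.complete [] P.init := Exec.nil _
  rcases hi : P.init with p | _ | _
  · rw [hi] at h0
    exact Or.inl (Or.inr ⟨p, h0⟩)
  · rw [hi] at h0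
    exact Or.inl (Or.inl h0)
  · rw [hi] at h0
    exact Or.inr h0

lemma reach_mem_TT {P : TIOTS Act} {w : TWord Act} {s : St P.Sig}
    (h : Reach P.complete w s) : w ∈ TTset P := by
  cases s with
  | plain p => exact Or.inl (Or.inr ⟨p, h⟩)
  | bot => exact Or.inl (Or.inl h)
  | top => exact Or.inr h

lemma TT_delay {P : TIOTS Act} (hP : WF P) (d : Delay) :
    [TAct.delay d] ∈ TTset P := by
  have h0 : Reach P.complete [] P.init := Exec.nil _
  cases hi : P.init with
  | plain p =>
    rw [hi] at h0
    obtain ⟨s', hs'⟩ := ctot hP p (α := .delay d) trivial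
    have := exec_snoc h0 hs'
    rw [nil_tcat] at this
    exact reach_mem_TT this
  | bot =>
    rw [hi] at h0
    have := exec_snoc h0 (show P.complete.tr .bot (TAct.delay d) .bot from
      (ctr_bot hP).2 ⟨trivial, rfl⟩)
    rw [nil_tcat] at this
    exact reach_mem_TT this
  | top =>
    rw [hi] at h0
    have := exec_snoc h0 (show P.complete.tr .top (TAct.delay d) .top from
      (ctr_top hP).2 ⟨trivial, rfl⟩)
    rw [nil_tcat] at this
    exact reach_mem_TT this

lemma TT_ext_act {P : TIOTS Act} (hP : WF P) {u : TWord Act} {α : TAct Act}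
    (hu : u ∈ TRset P) (hv : TAct.valid P.A α) : tcat u [α] ∈ TTset P := by
  rcases hu with hu | ⟨p, hu⟩
  · exact reach_mem_TT (exec_snoc hu ((ctr_bot hP).2 ⟨hv, rfl⟩))
  · obtain ⟨s', hs'⟩ := ctot hP p hv
    exact reach_mem_TT (exec_snoc hu hs')

lemma TT_ext_delay {P : TIOTS Act} (hP : WF P) {u : TWord Act}
    (hu : u ∈ TTset P) (d : Delay) : tcat u [TAct.delay d] ∈ TTset P := by
  rcases hu with (hu | ⟨p, hu⟩) | hu
  · exact reach_mem_TT (exec_snoc hu (show P.complete.tr .bot (TAct.delay d) .bot from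
      (ctr_bot hP).2 ⟨trivial, rfl⟩))
  · obtain ⟨s', hs'⟩ := ctot hP p (α := .delay d) trivial
    exact reach_mem_TT (exec_snoc hu hs')
  · exact reach_mem_TT (exec_snoc hu (show P.complete.tr .top (TAct.delay d) .top from
      (ctr_top hP).2 ⟨trivial, rfl⟩))

variable {Act : Type}

/-- Well-formed timed words. -/
abbrev WfWord (Act : Type) := {v : TWord Act // IsTWord v}

def endSt {Act : Type} (bot : Bool) (v : WfWord Act) : St (WfWord Act) :=
  match bot, v with
  | true, ⟨[], _⟩ => .bot
  | _, _ => .plain v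

lemma endSt_true_nil (h : IsTWord ([] : TWord Act)) : endSt true ⟨[], h⟩ = .bot := rfl

lemma endSt_cons (bot : Bool) (x : TAct Act) (v' : TWord Act) (h : IsTWord (x :: v')) :
    endSt bot ⟨x :: v', h⟩ = .plain ⟨x :: v', h⟩ := by cases bot <;> rfl

lemma endSt_false (v : WfWord Act) : endSt false v = .plain v := by
  rcases v with ⟨_ | _, h⟩ <;> rfl

def overSt {Act : Type} (bot : Bool) (v : TWord Act) : St (WfWord Act) :=
  match bot, v with
  | true, [] => .bot
  | _, _ => .top

lemma overSt_true_nil : overSt true ([] : TWord Act) = .bot := rfl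
lemma overSt_cons (bot : Bool) (x : TAct Act) (v : TWord Act) :
    overSt bot (x :: v) = .top := by cases bot <;> rfl
lemma overSt_false (v : TWord Act) : overSt false v = .top := by cases v <;> rfl

def ptr {Act : Type} (bot : Bool) : WfWord Act → TAct Act → St (WfWord Act) → Prop
  | ⟨[], _⟩, _, s' => s' = .top
  | ⟨TAct.act b :: v', h⟩, α, s' =>
      (α = TAct.act b ∧ s' = endSt bot ⟨v', wf_tail h⟩) ∨ (α ≠ TAct.act b ∧ s' = .top)
  | ⟨TAct.delay d :: v', h⟩, α, s' =>
      (∃ c₁ c₂ : Delay, dsum c₁ c₂ = d ∧ α = TAct.delay c₁ ∧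
         s' = .plain ⟨TAct.delay c₂ :: v', wf_dhead h⟩) ∨
      (α = TAct.delay d ∧ s' = endSt bot ⟨v', wf_tail h⟩) ∨
      (∃ c c₂ : Delay, dsum d c₂ = c ∧ α = TAct.delay c ∧ s' = overSt bot v') ∨
      (∃ a, α = TAct.act a ∧ s' = .top)

lemma ptr_nil (bot : Bool) (h : IsTWord ([] : TWord Act)) (α : TAct Act)
    (s' : St (WfWord Act)) : ptr bot ⟨[], h⟩ α s' ↔ s' = .top := Iff.rfl

lemma ptr_act (bot : Bool) (b : Act) (v' : TWord Act) (h : IsTWord (TAct.act b :: v'))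
    (α : TAct Act) (s' : St (WfWord Act)) :
    ptr bot ⟨TAct.act b :: v', h⟩ α s' ↔
      ((α = TAct.act b ∧ s' = endSt bot ⟨v', wf_tail h⟩) ∨ (α ≠ TAct.act b ∧ s' = .top)) :=
  Iff.rfl

lemma ptr_delay (bot : Bool) (d : Delay) (v' : TWord Act) (h : IsTWord (TAct.delay d :: v'))
    (α : TAct Act) (s' : St (WfWord Act)) :
    ptr bot ⟨TAct.delay d :: v', h⟩ α s' ↔
      ((∃ c₁ c₂ : Delay, dsum c₁ c₂ = d ∧ α = TAct.delay c₁ ∧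
          s' = .plain ⟨TAct.delay c₂ :: v', wf_dhead h⟩) ∨
       (α = TAct.delay d ∧ s' = endSt bot ⟨v', wf_tail h⟩) ∨
       (∃ c c₂ : Delay, dsum d c₂ = c ∧ α = TAct.delay c ∧ s' = overSt bot v') ∨
       (∃ a, α = TAct.act a ∧ s' = .top)) := Iff.rfl

/-- Test environment following the word `w`. -/
def EnvT (Ie Oe : Set Act) (bot : Bool) (w : WfWord Act) : TIOTS Act where
  Sig := WfWord Act
  I := Ie
  O := Oe
  init := endSt bot w
  tr := fun s α s' =>
    (s = .top ∧ TAct.isDelay α ∧ s' = .top) ∨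
    (s = .bot ∧ TAct.valid (Ie ∪ Oe) α ∧ s' = .bot) ∨
    (∃ v, s = .plain v ∧ TAct.valid (Ie ∪ Oe) α ∧ ptr bot v α s')

variable {Ie Oe : Set Act} {bot : Bool} {w : WfWord Act}

lemma etr_plain {v : WfWord Act} {α : TAct Act} {s' : St (WfWord Act)} :
    (EnvT Ie Oe bot w).tr (.plain v) α s' ↔
      (TAct.valid (Ie ∪ Oe) α ∧ ptr bot v α s') := by
  constructor
  · rintro (⟨h, _⟩ | ⟨h, _⟩ | ⟨v', hv, hval, hp⟩)
    · exact absurd h (fun hh => nomatch hh)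
    · exact absurd h (fun hh => nomatch hh)
    · cases St.plain.inj hv
      exact ⟨hval, hp⟩
  · rintro ⟨hval, hp⟩
    exact Or.inr (Or.inr ⟨v, rfl, hval, hp⟩)

lemma envt_enabled (v : WfWord Act) (α : TAct Act) (hv : TAct.valid (Ie ∪ Oe) α) :
    enabled (EnvT Ie Oe bot w) (.plain v) α := by
  rcases v with ⟨l, h⟩
  rcases l with _ | ⟨x, v'⟩
  · exact ⟨.top, etr_plain.2 ⟨hv, rfl⟩⟩
  · cases x with
    | act b =>
      by_cases hα : α = TAct.act b
      · exact ⟨_, etr_plain.2 ⟨hv, Or.inl ⟨hα, rfl⟩⟩⟩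
      · exact ⟨.top, etr_plain.2 ⟨hv, Or.inr ⟨hα, rfl⟩⟩⟩
    | delay D =>
      cases α with
      | act a => exact ⟨.top, etr_plain.2 ⟨hv, Or.inr (Or.inr (Or.inr ⟨a, rfl, rfl⟩))⟩⟩
      | delay c =>
        rcases lt_trichotomy c.1 D.1 with hlt | heq | hgt
        · refine ⟨_, etr_plain.2 ⟨hv, Or.inl ⟨c, ⟨D.1 - c.1, by linarith⟩,
            Subtype.ext (by simp [dsum]), rfl, rfl⟩⟩⟩
        · exact ⟨_, etr_plain.2 ⟨hv, Or.inr (Or.inl ⟨by rw [Subtype.ext heq], rfl⟩)⟩⟩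
        · refine ⟨_, etr_plain.2 ⟨hv, Or.inr (Or.inr (Or.inl ⟨c, ⟨c.1 - D.1, by linarith⟩,
            Subtype.ext (by simp [dsum]), rfl, rfl⟩))⟩⟩

lemma envt_complete {s : St (WfWord Act)} {α : TAct Act} {s' : St (WfWord Act)} :
    (EnvT Ie Oe bot w).complete.tr s α s' ↔ (EnvT Ie Oe bot w).tr s α s' := by
  constructor
  · intro h
    rcases ctr_iff.1 h with h | ⟨⟨p, rfl⟩, ⟨a, ha, rfl⟩, hne, _⟩ | ⟨⟨p, rfl⟩, hvO, hne, _⟩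
    · exact h
    · exact absurd (envt_enabled p _ (Set.mem_union_left _ ha)) hne
    · obtain ⟨s₀, h₀⟩ := envt_enabled (Ie := Ie) (Oe := Oe) (bot := bot) (w := w) p α
        (valid_mono Set.subset_union_right hvO)
      exact absurd ⟨s₀, Or.inl h₀⟩ hne
  · intro h
    exact ctr_iff.2 (Or.inl h)


variable {Ie Oe : Set Act} {bot : Bool} {w : WfWord Act}


lemma etr_top {α : TAct Act} {s' : St (WfWord Act)} :
    (EnvT Ie Oe bot w).tr .top α s' ↔ (TAct.isDelay α ∧ s' = .top) := by
  constructor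
  · rintro (⟨_, hd, rfl⟩ | ⟨h, _⟩ | ⟨v, h, _⟩)
    · exact ⟨hd, rfl⟩
    · exact absurd h (fun hh => nomatch hh)
    · exact absurd h (fun hh => nomatch hh)
  · rintro ⟨hd, rfl⟩
    exact Or.inl ⟨rfl, hd, rfl⟩

lemma etr_bot {α : TAct Act} {s' : St (WfWord Act)} :
    (EnvT Ie Oe bot w).tr .bot α s' ↔ (TAct.valid (Ie ∪ Oe) α ∧ s' = .bot) := by
  constructor
  · rintro (⟨h, _⟩ | ⟨_, hv, rfl⟩ | ⟨v, h, _⟩)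
    · exact absurd h (fun hh => nomatch hh)
    · exact ⟨hv, rfl⟩
    · exact absurd h (fun hh => nomatch hh)
  · rintro ⟨hv, rfl⟩
    exact Or.inr (Or.inl ⟨rfl, hv, rfl⟩)

lemma overSt_cases (bot : Bool) (v : TWord Act) :
    overSt bot v = .bot ∨ overSt bot v = .top := by
  cases bot <;> cases v
  · exact Or.inr rfl
  · exact Or.inr rfl
  · exact Or.inl rfl
  · exact Or.inr rfl

lemma dval (x y : Delay) : (dsum x y).1 = x.1 + y.1 := rfl

lemma envt_add (p : WfWord Act) (d e : Delay) (s' : St (WfWord Act)) :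
    (EnvT Ie Oe bot w).tr (.plain p) (.delay (dsum d e)) s' ↔
      ∃ s, (EnvT Ie Oe bot w).tr (.plain p) (.delay d) s ∧
        (EnvT Ie Oe bot w).tr s (.delay e) s' := by
  constructor
  · intro h
    obtain ⟨-, hp⟩ := etr_plain.1 h
    rcases p with ⟨l, hl⟩
    rcases l with _ | ⟨x, v'⟩
    · -- state []
      rw [ptr_nil] at hp
      subst hp
      exact ⟨.top, etr_plain.2 ⟨trivial, rfl⟩, etr_top.2 ⟨trivial, rfl⟩⟩
    · cases x with
      | act b =>
        rcases (ptr_act ..).1 hp with ⟨habs, _⟩ | ⟨-, rfl⟩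
        · exact absurd habs (fun hh => nomatch hh)
        · exact ⟨.top, etr_plain.2 ⟨trivial,
            (ptr_act ..).2 (Or.inr ⟨fun hh => (nomatch hh), rfl⟩)⟩,
            etr_top.2 ⟨trivial, rfl⟩⟩
      | delay D =>
        rcases (ptr_delay ..).1 hp with ⟨c₁, c₂, hsum, hα, rfl⟩ | ⟨hα, rfl⟩ |
          ⟨c, c₂, hsum, hα, rfl⟩ | ⟨a, hα, -⟩
        · -- partial consumption
          have hc₁ : c₁ = dsum d e := (TAct.delay.inj hα).symm
          subst hc₁
          refine ⟨.plain ⟨TAct.delay (dsum e c₂) :: v', wf_dhead hl⟩,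
            etr_plain.2 ⟨trivial, (ptr_delay ..).2 (Or.inl ⟨d, dsum e c₂, ?_, rfl, rfl⟩)⟩,
            etr_plain.2 ⟨trivial, (ptr_delay ..).2 (Or.inl ⟨e, c₂, rfl, rfl, rfl⟩)⟩⟩
          rw [← hsum, ← dsum_assoc]
        · -- exact consumption
          have hD : dsum d e = D := TAct.delay.inj hα
          refine ⟨.plain ⟨TAct.delay e :: v', wf_dhead hl⟩,
            etr_plain.2 ⟨trivial, (ptr_delay ..).2 (Or.inl ⟨d, e, hD, rfl, rfl⟩)⟩,
            etr_plain.2 ⟨trivial, (ptr_delay ..).2 (Or.inr (Or.inl ⟨rfl, rfl⟩))⟩⟩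
        · -- overshoot
          have hc : c = dsum d e := (TAct.delay.inj hα).symm
          subst hc
          have harith : D.1 + c₂.1 = d.1 + e.1 := by
            have := congrArg Subtype.val hsum
            simpa [dval] using this
          rcases lt_trichotomy d.1 D.1 with hlt | heq | hgt
          · -- d < D : split inside current delay
            refine ⟨.plain ⟨TAct.delay ⟨D.1 - d.1, by linarith⟩ :: v', wf_dhead hl⟩,
              etr_plain.2 ⟨trivial, (ptr_delay ..).2
                (Or.inl ⟨d, ⟨D.1 - d.1, by linarith⟩, Subtype.ext (by simp [dval]), rfl, rfl⟩)⟩,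
              etr_plain.2 ⟨trivial, (ptr_delay ..).2
                (Or.inr (Or.inr (Or.inl ⟨e, c₂, Subtype.ext (by simp [dval]; linarith), rfl, rfl⟩)))⟩⟩
          · -- d = D : reach the end state, then overshoot from it
            have hDe : d = D := Subtype.ext heq
            subst hDe
            have he : e = c₂ := Subtype.ext (by linarith)
            subst he
            refine ⟨endSt bot ⟨v', wf_tail hl⟩,
              etr_plain.2 ⟨trivial, (ptr_delay ..).2 (Or.inr (Or.inl ⟨rfl, rfl⟩))⟩, ?_⟩
            rcases v' with _ | ⟨z, v''⟩
            · cases bot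
              · rw [endSt_false, overSt_false]
                exact etr_plain.2 ⟨trivial, rfl⟩
              · rw [endSt_true_nil, overSt_true_nil]
                exact etr_bot.2 ⟨trivial, rfl⟩
            · rw [endSt_cons, overSt_cons]
              cases z with
              | act b => exact etr_plain.2 ⟨trivial,
                  (ptr_act ..).2 (Or.inr ⟨fun hh => (nomatch hh), rfl⟩)⟩
              | delay z' => exact absurd hl (fun hh => wf_not_dd hh)
          · -- d > D : overshoot already in first step
            refine ⟨overSt bot v',
              etr_plain.2 ⟨trivial, (ptr_delay ..).2 (Or.inr (Or.inr (Or.inl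
                ⟨d, ⟨d.1 - D.1, by linarith⟩, Subtype.ext (by simp [dval]), rfl, rfl⟩)))⟩, ?_⟩
            rcases overSt_cases bot v' with hov | hov <;> rw [hov]
            · exact etr_bot.2 ⟨trivial, hov ▸ rfl⟩
            · exact etr_top.2 ⟨trivial, hov ▸ rfl⟩
        · exact absurd hα (fun hh => nomatch hh)
  · rintro ⟨m, h1, h2⟩
    obtain ⟨-, hp1⟩ := etr_plain.1 h1
    refine etr_plain.2 ⟨trivial, ?_⟩
    rcases p with ⟨l, hl⟩
    rcases l with _ | ⟨x, v'⟩
    · erw [ptr_nil] at hp1 ⊢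
      subst hp1
      exact (etr_top.1 h2).2
    · cases x with
      | act b =>
        rcases (ptr_act ..).1 hp1 with ⟨habs, -⟩ | ⟨-, rfl⟩
        · exact absurd habs (fun hh => nomatch hh)
        · exact (ptr_act ..).2 (Or.inr ⟨fun hh => (nomatch hh), (etr_top.1 h2).2⟩)
      | delay D =>
        rcases (ptr_delay ..).1 hp1 with ⟨c₁, c₂, hsum, hα, rfl⟩ | ⟨hα, rfl⟩ |
          ⟨c, c₂, hsum, hα, rfl⟩ | ⟨a, hα, -⟩
        · -- first step partial
          have hc₁ : c₁ = d := (TAct.delay.inj hα).symm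
          rw [hc₁] at hsum
          obtain ⟨-, hp2⟩ := etr_plain.1 h2
          rcases (ptr_delay ..).1 hp2 with ⟨e₁, e₂, hsum2, hα2, rfl⟩ | ⟨hα2, rfl⟩ |
            ⟨c, e₂, hsum2, hα2, rfl⟩ | ⟨a, hα2, -⟩
          · have he₁ : e₁ = e := (TAct.delay.inj hα2).symm
            rw [he₁] at hsum2
            refine (ptr_delay ..).2 (Or.inl ⟨dsum d e, e₂, ?_, rfl, rfl⟩)
            rw [dsum_assoc, hsum2, hsum]
          · have he : c₂ = e := (TAct.delay.inj hα2).symm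
            rw [he] at hsum
            exact (ptr_delay ..).2 (Or.inr (Or.inl ⟨by rw [hsum], rfl⟩))
          · have hc : c = e := (TAct.delay.inj hα2).symm
            rw [hc] at hsum2
            refine (ptr_delay ..).2 (Or.inr (Or.inr (Or.inl ⟨dsum d e, e₂, ?_, rfl, rfl⟩)))
            refine Subtype.ext ?_
            have h1' := congrArg Subtype.val hsum
            have h2' := congrArg Subtype.val hsum2
            simp [dval] at h1' h2' ⊢
            linarith
          · exact absurd hα2 (fun hh => nomatch hh)
        · -- first step exact
          have hD : d = D := TAct.delay.inj hα
          subst hD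
          rcases v' with _ | ⟨z, v''⟩
          · cases bot
            · rw [endSt_false] at h2
              obtain ⟨-, hp2⟩ := etr_plain.1 h2
              rw [ptr_nil] at hp2
              subst hp2
              exact (ptr_delay ..).2 (Or.inr (Or.inr (Or.inl ⟨dsum d e, e, rfl, rfl,
                (overSt_false _).symm⟩)))
            · rw [endSt_true_nil] at h2
              obtain ⟨-, hs'⟩ := etr_bot.1 h2
              subst hs'
              exact (ptr_delay ..).2 (Or.inr (Or.inr (Or.inl ⟨dsum d e, e, rfl, rfl,
                overSt_true_nil.symm⟩)))
          · rw [endSt_cons] at h2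
            obtain ⟨-, hp2⟩ := etr_plain.1 h2
            cases z with
            | act b =>
              rcases (ptr_act ..).1 hp2 with ⟨habs, -⟩ | ⟨-, rfl⟩
              · exact absurd habs (fun hh => nomatch hh)
              · exact (ptr_delay ..).2 (Or.inr (Or.inr (Or.inl ⟨dsum d e, e, rfl, rfl,
                  (overSt_cons ..).symm⟩)))
            | delay z' => exact absurd hl (fun hh => wf_not_dd hh)
        · -- first step overshoot
          have hc : c = d := (TAct.delay.inj hα).symm
          rw [hc] at hsum
          have hs' : s' = overSt bot v' := by
            rcases overSt_cases bot v' with hov | hov <;> rw [hov] at h2 ⊢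
            · exact (etr_bot.1 h2).2
            · exact (etr_top.1 h2).2
          refine (ptr_delay ..).2 (Or.inr (Or.inr (Or.inl ⟨dsum d e, dsum c₂ e, ?_, rfl, hs'⟩)))
          refine Subtype.ext ?_
          have h1' := congrArg Subtype.val hsum
          simp [dval] at h1' ⊢
          linarith
        · exact absurd hα (fun hh => nomatch hh)

lemma envT_WF (hD : Disjoint Ie Oe) : WF (EnvT Ie Oe bot w) := by
  refine ⟨hD, ?_, ?_, ?_, fun p d e s' => envt_add p d e s'⟩
  · rintro s α s' (⟨-, hd, -⟩ | ⟨-, hv, -⟩ | ⟨v, -, hv, -⟩)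
    · cases α with
      | act a => exact absurd hd id
      | delay d => trivial
    · exact hv
    · exact hv
  · intro α s'
    exact etr_top
  · intro α s'
    exact etr_bot

variable {Act : Type}

lemma exec_complete_of {R : TIOTS Act} {s : St R.Sig} {v : TWord Act} {t : St R.Sig}
    (h : Exec R s v t) : Exec R.complete s v t := by
  induction h with
  | nil => exact Exec.nil _
  | cons hstep _ ih => exact Exec.cons (ctr_iff.2 (Or.inl hstep)) ih

variable {Ie Oe : Set Act} {w : WfWord Act}

lemma envt_run_false :
    ∀ (l : TWord Act) (hl : IsTWord l), (∀ β ∈ l, TAct.valid (Ie ∪ Oe) β) →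
      Exec (EnvT Ie Oe false w) (.plain ⟨l, hl⟩) l (.plain ⟨[], List.isChain_nil⟩) := by
  intro l
  induction l with
  | nil => intro hl _; exact Exec.nil _
  | cons x l' ih =>
    intro hl hval
    have step : (EnvT Ie Oe false w).tr (.plain ⟨x :: l', hl⟩) x (.plain ⟨l', wf_tail hl⟩) := by
      cases x with
      | act b =>
        exact etr_plain.2 ⟨hval _ (List.mem_cons_self),
          (ptr_act ..).2 (Or.inl ⟨rfl, (endSt_false _).symm⟩)⟩
      | delay D =>
        exact etr_plain.2 ⟨trivial,
          (ptr_delay ..).2 (Or.inr (Or.inl ⟨rfl, (endSt_false _).symm⟩))⟩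
    have hrec := ih (wf_tail hl) (fun β hβ => hval β (List.mem_cons_of_mem _ hβ))
    have := Exec.cons step hrec
    rwa [wf_cons_tcat hl] at this

lemma envt_run_true :
    ∀ (l : TWord Act) (hl : IsTWord l), l ≠ [] → (∀ β ∈ l, TAct.valid (Ie ∪ Oe) β) →
      Exec (EnvT Ie Oe true w) (.plain ⟨l, hl⟩) l .bot := by
  intro l
  induction l with
  | nil => intro hl h _; exact absurd rfl h
  | cons x l' ih =>
    intro hl _ hval
    rcases l' with _ | ⟨z, l''⟩
    · -- last element: step to ⊥
      have step : (EnvT Ie Oe true w).tr (.plain ⟨[x], hl⟩) x .bot := by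
        cases x with
        | act b =>
          exact etr_plain.2 ⟨hval _ (List.mem_cons_self),
            (ptr_act ..).2 (Or.inl ⟨rfl, (endSt_true_nil _).symm⟩)⟩
        | delay D =>
          exact etr_plain.2 ⟨trivial,
            (ptr_delay ..).2 (Or.inr (Or.inl ⟨rfl, (endSt_true_nil _).symm⟩))⟩
      exact exec_single step
    · have step : (EnvT Ie Oe true w).tr (.plain ⟨x :: z :: l'', hl⟩) x
          (.plain ⟨z :: l'', wf_tail hl⟩) := by
        cases x with
        | act b =>
          exact etr_plain.2 ⟨hval _ (List.mem_cons_self),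
            (ptr_act ..).2 (Or.inl ⟨rfl, (endSt_cons ..).symm⟩)⟩
        | delay D =>
          exact etr_plain.2 ⟨trivial,
            (ptr_delay ..).2 (Or.inr (Or.inl ⟨rfl, (endSt_cons ..).symm⟩))⟩
      have hrec := ih (wf_tail hl) (by simp) (fun β hβ => hval β (List.mem_cons_of_mem _ hβ))
      have := Exec.cons step hrec
      rwa [wf_cons_tcat hl] at this

lemma stPar_plain_right {σ₀ σ₁ : Type} {x : St σ₀} {r : σ₁}
    (h : stPar x (.plain r) = .bot) : x = .bot := by
  cases x
  · exact absurd h (fun hh => nomatch hh)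
  · rfl
  · exact absurd h (fun hh => nomatch hh)

lemma stPar_bot_right {σ₀ σ₁ : Type} {x : St σ₀}
    (h : stPar x (.bot : St σ₁) = .bot) : x = .bot ∨ ∃ r, x = .plain r := by
  cases x with
  | plain r => exact Or.inr ⟨r, rfl⟩
  | bot => exact Or.inl rfl
  | top => exact absurd h (fun hh => nomatch hh)

lemma valid_union_comm {A B : Set Act} {α : TAct Act} (h : TAct.valid (A ∪ B) α) :
    TAct.valid (B ∪ A) α := by
  cases α with
  | act a => exact Set.union_comm A B ▸ h
  | delay d => trivial

lemma K0 {P : TIOTS Act} (hP : WF P) {Ie Oe : Set Act} {w : WfWord Act} :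
    ∀ {u : TWord Act} {st e : St P.Sig × St (EnvT Ie Oe false w).Sig},
      DPExec P (EnvT Ie Oe false w) st u e →
      ∀ (sp : St P.Sig) (l : TWord Act) (hl : IsTWord l),
        st = (sp, .plain ⟨l, hl⟩) → stPar e.1 e.2 = .bot →
        (∀ β ∈ l, TAct.valid P.A β) → Exec P.complete sp l .bot := by
  intro u st e h
  induction h with
  | nil st0 =>
    intro sp l hl hst hb hval
    subst hst
    have := stPar_plain_right hb
    subst this
    exact chaotic_exec hP hl hval
  | @cons p q α s₀ s₁ u' e' htrP htrR hrest ih =>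
    intro sp l hl hst hb hval
    have h1 : St.plain p = sp := congrArg Prod.fst hst
    have h2 : q = ⟨l, hl⟩ := St.plain.inj (congrArg Prod.snd hst)
    subst h1
    subst h2
    obtain ⟨-, hptr⟩ := etr_plain.1 (envt_complete.1 htrR)
    rcases l with _ | ⟨x, l'⟩
    · erw [ptr_nil] at hptr
      subst hptr
      obtain ⟨-, he⟩ := dpexec_nonplain hrest (Or.inr (fun q hh => nomatch hh))
      rw [he] at hb
      erw [stPar_top_right] at hb
      exact absurd hb (fun hh => nomatch hh)
    · cases x with
      | act b =>
        rcases (ptr_act ..).1 hptr with ⟨rfl, hs₁⟩ | ⟨-, rfl⟩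
        · rw [endSt_false] at hs₁
          subst hs₁
          have hrec := ih s₀ l' (wf_tail hl) rfl hb
            (fun β hβ => hval β (List.mem_cons_of_mem _ hβ))
          have := Exec.cons htrP hrec
          rwa [wf_cons_tcat hl] at this
        · obtain ⟨-, he⟩ := dpexec_nonplain hrest (Or.inr (fun q hh => nomatch hh))
          rw [he] at hb
          erw [stPar_top_right] at hb
          exact absurd hb (fun hh => nomatch hh)
      | delay D =>
        rcases (ptr_delay ..).1 hptr with ⟨c₁, c₂, hsum, rfl, rfl⟩ | ⟨rfl, hs₁⟩ |
          ⟨c, c₂, hsum, rfl, hs₁⟩ | ⟨a, rfl, rfl⟩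
        · have hrec := ih s₀ (TAct.delay c₂ :: l') (wf_dhead hl) rfl hb
            (fun β hβ => by
              rcases List.mem_cons.1 hβ with rfl | hβ
              · trivial
              · exact hval β (List.mem_cons_of_mem _ hβ))
          have := Exec.cons htrP hrec
          rwa [tcat_delay_delay, hsum] at this
        · rw [endSt_false] at hs₁
          subst hs₁
          have hrec := ih s₀ l' (wf_tail hl) rfl hb
            (fun β hβ => hval β (List.mem_cons_of_mem _ hβ))
          have := Exec.cons htrP hrec
          rwa [wf_cons_tcat hl] at this
        · rw [overSt_false] at hs₁
          subst hs₁
          obtain ⟨-, he⟩ := dpexec_nonplain hrest (Or.inr (fun q hh => nomatch hh))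
          rw [he] at hb
          erw [stPar_top_right] at hb
          exact absurd hb (fun hh => nomatch hh)
        · obtain ⟨-, he⟩ := dpexec_nonplain hrest (Or.inr (fun q hh => nomatch hh))
          rw [he] at hb
          erw [stPar_top_right] at hb
          exact absurd hb (fun hh => nomatch hh)

lemma K1 {P : TIOTS Act} (hP : WF P) {Ie Oe : Set Act} {w : WfWord Act} :
    ∀ {u : TWord Act} {st e : St P.Sig × St (EnvT Ie Oe true w).Sig},
      DPExec P (EnvT Ie Oe true w) st u e →
      ∀ (sp : St P.Sig) (l : TWord Act) (hl : IsTWord l),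
        st = (sp, .plain ⟨l, hl⟩) → stPar e.1 e.2 = .bot →
        (∀ β ∈ l, TAct.valid P.A β) →
        ∃ x', Exec P.complete sp l x' ∧ (x' = .bot ∨ ∃ r, x' = .plain r) := by
  intro u st e h
  induction h with
  | nil st0 =>
    intro sp l hl hst hb hval
    subst hst
    have := stPar_plain_right hb
    subst this
    exact ⟨.bot, chaotic_exec hP hl hval, Or.inl rfl⟩
  | @cons p q α s₀ s₁ u' e' htrP htrR hrest ih =>
    intro sp l hl hst hb hval
    have h1 : St.plain p = sp := congrArg Prod.fst hst
    have h2 : q = ⟨l, hl⟩ := St.plain.inj (congrArg Prod.snd hst)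
    subst h1
    subst h2
    obtain ⟨-, hptr⟩ := etr_plain.1 (envt_complete.1 htrR)
    rcases l with _ | ⟨x, l'⟩
    · erw [ptr_nil] at hptr
      subst hptr
      obtain ⟨-, he⟩ := dpexec_nonplain hrest (Or.inr (fun q hh => nomatch hh))
      rw [he] at hb
      erw [stPar_top_right] at hb
      exact absurd hb (fun hh => nomatch hh)
    · cases x with
      | act b =>
        rcases (ptr_act ..).1 hptr with ⟨rfl, hs₁⟩ | ⟨-, rfl⟩
        · rcases l' with _ | ⟨z, l''⟩
          · rw [endSt_true_nil] at hs₁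
            subst hs₁
            obtain ⟨-, he⟩ := dpexec_nonplain hrest (Or.inr (fun q hh => nomatch hh))
            rw [he] at hb
            exact ⟨s₀, exec_single htrP, stPar_bot_right hb⟩
          · rw [endSt_cons] at hs₁
            subst hs₁
            obtain ⟨x', hx, hcs⟩ := ih s₀ (z :: l'') (wf_tail hl) rfl hb
              (fun β hβ => hval β (List.mem_cons_of_mem _ hβ))
            refine ⟨x', ?_, hcs⟩
            have := Exec.cons htrP hx
            rwa [wf_cons_tcat hl] at this
        · obtain ⟨-, he⟩ := dpexec_nonplain hrest (Or.inr (fun q hh => nomatch hh))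
          rw [he] at hb
          erw [stPar_top_right] at hb
          exact absurd hb (fun hh => nomatch hh)
      | delay D =>
        rcases (ptr_delay ..).1 hptr with ⟨c₁, c₂, hsum, rfl, rfl⟩ | ⟨rfl, hs₁⟩ |
          ⟨c, c₂, hsum, rfl, hs₁⟩ | ⟨a, rfl, rfl⟩
        · obtain ⟨x', hx, hcs⟩ := ih s₀ (TAct.delay c₂ :: l') (wf_dhead hl) rfl hb
            (fun β hβ => by
              rcases List.mem_cons.1 hβ with rfl | hβ
              · trivial
              · exact hval β (List.mem_cons_of_mem _ hβ))
          refine ⟨x', ?_, hcs⟩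
          have := Exec.cons htrP hx
          rwa [tcat_delay_delay, hsum] at this
        · rcases l' with _ | ⟨z, l''⟩
          · rw [endSt_true_nil] at hs₁
            subst hs₁
            obtain ⟨-, he⟩ := dpexec_nonplain hrest (Or.inr (fun q hh => nomatch hh))
            rw [he] at hb
            exact ⟨s₀, exec_single htrP, stPar_bot_right hb⟩
          · rw [endSt_cons] at hs₁
            subst hs₁
            obtain ⟨x', hx, hcs⟩ := ih s₀ (z :: l'') (wf_tail hl) rfl hb
              (fun β hβ => hval β (List.mem_cons_of_mem _ hβ))
            refine ⟨x', ?_, hcs⟩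
            have := Exec.cons htrP hx
            rwa [wf_cons_tcat hl] at this
        · -- overshoot
          rcases l' with _ | ⟨z, l''⟩
          · rw [overSt_true_nil] at hs₁
            subst hs₁
            obtain ⟨-, he⟩ := dpexec_nonplain hrest (Or.inr (fun q hh => nomatch hh))
            rw [he] at hb
            rw [← hsum] at htrP
            obtain ⟨mid, hm1, hm2⟩ := csplit hP htrP
            rcases stPar_bot_right hb with hs₀ | ⟨r, hs₀⟩
            · cases mid with
              | top =>
                obtain ⟨-, hst⟩ := (ctr_top hP).1 hm2
                rw [hst] at hs₀
                exact absurd hs₀ (fun hh => nomatch hh)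
              | bot => exact ⟨.bot, exec_single hm1, Or.inl rfl⟩
              | plain r => exact ⟨.plain r, exec_single hm1, Or.inr ⟨r, rfl⟩⟩
            · cases mid with
              | top =>
                obtain ⟨-, hst⟩ := (ctr_top hP).1 hm2
                rw [hst] at hs₀
                exact absurd hs₀ (fun hh => nomatch hh)
              | bot => exact ⟨.bot, exec_single hm1, Or.inl rfl⟩
              | plain r' => exact ⟨.plain r', exec_single hm1, Or.inr ⟨r', rfl⟩⟩
          · rw [overSt_cons] at hs₁
            subst hs₁
            obtain ⟨-, he⟩ := dpexec_nonplain hrest (Or.inr (fun q hh => nomatch hh))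
            rw [he] at hb
            erw [stPar_top_right] at hb
            exact absurd hb (fun hh => nomatch hh)
        · obtain ⟨-, he⟩ := dpexec_nonplain hrest (Or.inr (fun q hh => nomatch hh))
          rw [he] at hb
          erw [stPar_top_right] at hb
          exact absurd hb (fun hh => nomatch hh)

end AuxProofs

/-- For TIOTSs `P₀`, `P₁` with identical alphabets:
`P₀ ⊑ P₁` iff `TT₁ ⊆ TT₀`, `TR₁ ⊆ TR₀` and `TE₁ ⊆ TE₀`. -/
theorem refines_iff_trace_containment {Act : Type} (P₀ P₁ : TIOTS Act)
    (h₀ : WF P₀) (h₁ : WF P₁) (hI : P₀.I = P₁.I) (hO : P₀.O = P₁.O) :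
    Refines P₀ P₁ ↔
      (TTset P₁ ⊆ TTset P₀ ∧ TRset P₁ ⊆ TRset P₀ ∧ TEset P₁ ⊆ TEset P₀) := by
  have hA : P₁.A = P₀.A := by unfold TIOTS.A; rw [hI, hO]
  constructor
  · intro hRef
    -- TE containment
    have hTEc : TEset P₁ ⊆ TEset P₀ := by
      intro w hw
      have hwwf : IsTWord w := exec_wf hw
      have hwval1 : ∀ β ∈ w, TAct.valid P₁.A β :=
        exec_valid (fun s α s' h => ctr_valid h₁ h) hw
      have hwval : ∀ β ∈ w, TAct.valid P₀.A β := by rw [← hA]; exact hwval1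
      have hWR : WF (EnvT P₀.O P₀.I false ⟨w, hwwf⟩) := envT_WF h₀.1.symm
      have hEnvR : Env P₀ (EnvT P₀.O P₀.I false ⟨w, hwwf⟩) := ⟨rfl, rfl⟩
      have hEnvR1 : Env P₁ (EnvT P₀.O P₀.I false ⟨w, hwwf⟩) := ⟨hO, hI⟩
      have hrun : Reach (EnvT P₀.O P₀.I false ⟨w, hwwf⟩).complete w
          (.plain ⟨[], List.isChain_nil⟩) := by
        have h1 := envt_run_false (Ie := P₀.O) (Oe := P₀.I) (w := ⟨w, hwwf⟩) w hwwf
          (fun β hβ => valid_union_comm (hwval β hβ))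
        have h2 := exec_complete_of h1
        unfold Reach
        rw [show (EnvT P₀.O P₀.I false ⟨w, hwwf⟩).complete.init
            = .plain ⟨w, hwwf⟩ from endSt_false _]
        exact h2
      have hbf1 : ¬ BotFree (parC P₁ (EnvT P₀.O P₀.I false ⟨w, hwwf⟩)) :=
        parB h₁ hWR hEnvR1 (w := w)
          (Or.inl ⟨hw, Or.inr ⟨⟨[], List.isChain_nil⟩, hrun⟩⟩)
      have hbf0 : ¬ BotFree (parC P₀ (EnvT P₀.O P₀.I false ⟨w, hwwf⟩)) :=
        fun hbf => hbf1 (hRef.2.2 _ hWR hEnvR hbf)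
      obtain ⟨u, x, y, hdp, hb⟩ := par_bot_extract hEnvR hbf0
      rw [show (P₀.init, (EnvT P₀.O P₀.I false ⟨w, hwwf⟩).init)
          = (P₀.init, (.plain ⟨w, hwwf⟩ : St (WfWord Act)))
          from by rw [show (EnvT P₀.O P₀.I false ⟨w, hwwf⟩).init
            = .plain ⟨w, hwwf⟩ from endSt_false _]; rfl] at hdp
      exact K0 h₀ hdp P₀.init w hwwf rfl hb hwval
    -- TR containment
    have hTRc : TRset P₁ ⊆ TRset P₀ := by
      intro w hw
      have hex : ∃ t, Reach P₁.complete w t := by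
        rcases hw with hw | ⟨r, hw⟩
        · exact ⟨_, hw⟩
        · exact ⟨_, hw⟩
      obtain ⟨tw, hexw⟩ := hex
      have hwwf : IsTWord w := exec_wf hexw
      have hwval1 : ∀ β ∈ w, TAct.valid P₁.A β :=
        exec_valid (fun s α s' h => ctr_valid h₁ h) hexw
      have hwval : ∀ β ∈ w, TAct.valid P₀.A β := by rw [← hA]; exact hwval1
      clear hexw hwval1
      rcases w with _ | ⟨z, l⟩
      · -- empty word
        have hWR : WF (EnvT P₀.O P₀.I true ⟨[], hwwf⟩) := envT_WF h₀.1.symm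
        have hEnvR : Env P₀ (EnvT P₀.O P₀.I true ⟨[], hwwf⟩) := ⟨rfl, rfl⟩
        have hEnvR1 : Env P₁ (EnvT P₀.O P₀.I true ⟨[], hwwf⟩) := ⟨hO, hI⟩
        have hTER : ([] : TWord Act) ∈ TEset (EnvT P₀.O P₀.I true ⟨[], hwwf⟩) := by
          show Reach _ [] .bot
          unfold Reach
          rw [show (EnvT P₀.O P₀.I true ⟨[], hwwf⟩).complete.init = .bot from
            endSt_true_nil hwwf]
          exact Exec.nil _
        have hbf1 : ¬ BotFree (parC P₁ (EnvT P₀.O P₀.I true ⟨[], hwwf⟩)) :=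
          parB h₁ hWR hEnvR1 (w := []) (Or.inr ⟨hw, hTER⟩)
        have hbf0 : ¬ BotFree (parC P₀ (EnvT P₀.O P₀.I true ⟨[], hwwf⟩)) :=
          fun hbf => hbf1 (hRef.2.2 _ hWR hEnvR hbf)
        obtain ⟨u, x, y, hdp, hb⟩ := par_bot_extract hEnvR hbf0
        rw [show (P₀.init, (EnvT P₀.O P₀.I true ⟨[], hwwf⟩).init)
            = (P₀.init, (.bot : St (WfWord Act))) from by
          rw [show (EnvT P₀.O P₀.I true ⟨[], hwwf⟩).init = .bot from endSt_true_nil hwwf]; rfl] at hdp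
        obtain ⟨-, he⟩ := dpexec_nonplain hdp (Or.inr (fun q hh => nomatch hh))
        have hx : x = P₀.init := congrArg Prod.fst he
        have hy : y = .bot := congrArg Prod.snd he
        subst hx; subst hy
        have h0 : Reach P₀.complete [] P₀.init := Exec.nil _
        rcases stPar_bot_right hb with hx | ⟨r, hx⟩
        · rw [hx] at h0
          exact Or.inl h0
        · rw [hx] at h0
          exact Or.inr ⟨r, h0⟩
      · -- nonempty word
        have hWR : WF (EnvT P₀.O P₀.I true ⟨z :: l, hwwf⟩) := envT_WF h₀.1.symm
        have hEnvR : Env P₀ (EnvT P₀.O P₀.I true ⟨z :: l, hwwf⟩) := ⟨rfl, rfl⟩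
        have hEnvR1 : Env P₁ (EnvT P₀.O P₀.I true ⟨z :: l, hwwf⟩) := ⟨hO, hI⟩
        have hTER : (z :: l) ∈ TEset (EnvT P₀.O P₀.I true ⟨z :: l, hwwf⟩) := by
          show Reach _ (z :: l) .bot
          unfold Reach
          rw [show (EnvT P₀.O P₀.I true ⟨z :: l, hwwf⟩).complete.init
              = .plain ⟨z :: l, hwwf⟩ from endSt_cons true z l hwwf]
          exact exec_complete_of (envt_run_true (z :: l) hwwf (by simp)
            (fun β hβ => valid_union_comm (hwval β hβ)))
        have hbf1 : ¬ BotFree (parC P₁ (EnvT P₀.O P₀.I true ⟨z :: l, hwwf⟩)) :=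
          parB h₁ hWR hEnvR1 (w := z :: l) (Or.inr ⟨hw, hTER⟩)
        have hbf0 : ¬ BotFree (parC P₀ (EnvT P₀.O P₀.I true ⟨z :: l, hwwf⟩)) :=
          fun hbf => hbf1 (hRef.2.2 _ hWR hEnvR hbf)
        obtain ⟨u, x, y, hdp, hb⟩ := par_bot_extract hEnvR hbf0
        rw [show (P₀.init, (EnvT P₀.O P₀.I true ⟨z :: l, hwwf⟩).init)
            = (P₀.init, (.plain ⟨z :: l, hwwf⟩ : St (WfWord Act))) from by
          rw [show (EnvT P₀.O P₀.I true ⟨z :: l, hwwf⟩).init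
              = .plain ⟨z :: l, hwwf⟩ from endSt_cons true z l hwwf]; rfl] at hdp
        obtain ⟨x', hexx, hcs⟩ := K1 h₀ hdp P₀.init (z :: l) hwwf rfl hb hwval
        rcases hcs with rfl | ⟨r, rfl⟩
        · exact Or.inl hexx
        · exact Or.inr ⟨r, hexx⟩
    refine ⟨?_, hTRc, hTEc⟩
    -- TT containment
    intro w hw
    rcases hw with (hw | hw) | hw
    · exact Or.inl (Or.inl (hTEc hw))
    · exact Or.inl (hTRc (Or.inr hw))
    · rcases TM_decomp h₁ hw with (rfl | ⟨d, rfl⟩) | ⟨u, α, hu, hva, hw'⟩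
      · exact TT_nil
      · exact TT_delay h₀ d
      · have hu0 : u ∈ TRset P₀ := hTRc (Or.inr hu)
        have hva0 : TAct.valid P₀.A α := by rw [← hA]; exact hva
        rcases hw' with rfl | ⟨d, rfl⟩
        · exact TT_ext_act h₀ hu0 hva0
        · exact TT_ext_delay h₀ (TT_ext_act h₀ hu0 hva0) d
  · rintro ⟨hTT, hTR, hTE⟩
    refine ⟨hI, hO, ?_⟩
    intro R hWR hEnv hBF0
    by_contra hbf1
    have hEnv1 : Env P₁ R := ⟨hEnv.1.trans hO, hEnv.2.trans hI⟩
    obtain ⟨u, hcase⟩ := bot_extract_traces hEnv1 hbf1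
    refine absurd hBF0 (parB h₀ hWR hEnv (w := u) ?_)
    rcases hcase with ⟨h1, h2⟩ | ⟨h1, h2⟩
    · exact Or.inl ⟨hTE h1, h2⟩
    · exact Or.inr ⟨hTR h1, h2⟩


end TSpec
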